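/- arXiv:1503.07910 — 7 statements merged into one kernel-verified Lean document; each statement's English description precedes it below -/
import Mathlib

section
/- Let ω ∈ C([0,T]) with ω₀ = 0 and b : ℝ → ℝ measurable with b(0) = 0. If y : [0,T] → ℝ is continuous and satisfies y_t = ∫₀ᵗ b(y_s + ω_s) ds for all t, and b is nonnegative and non-decreasing on [0,∞), b non-increasing on (-∞,0], and b(|x|) ≤ b(-|x|) for all x, then y is non-negative and non-decreasing on [0,T]. -/
open MeasureTheory intervalIntegral

/-!
Since `b 0 = 0` and `b` is antitone on `(-∞, 0]` and nonnegative on `[0, ∞)`, `b` is nonnegative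
everywhere, so `y` is the primitive of a nonnegative function. For the integrals to be genuine
(not Lean's junk value `0`), `b (y s + ω s)` must be integrable: `y + ω` is continuous, hence
bounded by some `M` on `[0, T]`, and the monotonicity of `b` on each half-line bounds `b` on
`[-M, M]` by `max (b M) (b (-M))`.
-/

section

variable {b : ℝ → ℝ}

lemma nonneg_of_antitoneOn_Iic (hb0 : b 0 = 0) (hbnonneg : ∀ x, 0 ≤ x → 0 ≤ b x)
    (hbanti : AntitoneOn b (Set.Iic 0)) (x : ℝ) : 0 ≤ b x := by
  rcases le_or_gt 0 x with hx | hx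
  · exact hbnonneg x hx
  · simpa [hb0] using hbanti (Set.mem_Iic.2 hx.le) Set.self_mem_Iic hx.le

lemma apply_le_max_of_abs_le (hbmono : MonotoneOn b (Set.Ici 0))
    (hbanti : AntitoneOn b (Set.Iic 0)) {x M : ℝ} (hx : |x| ≤ M) :
    b x ≤ max (b M) (b (-M)) := by
  obtain ⟨hMx, hxM⟩ := abs_le.1 hx
  rcases le_or_gt 0 x with h | h
  · exact (hbmono h (h.trans hxM) hxM).trans (le_max_left _ _)
  · exact (hbanti (hMx.trans h.le) h.le hMx).trans (le_max_right _ _)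

lemma integrableOn_comp_of_monotoneOn_antitoneOn (hbmeas : Measurable b)
    (hbnonneg : ∀ x, 0 ≤ b x) (hbmono : MonotoneOn b (Set.Ici 0))
    (hbanti : AntitoneOn b (Set.Iic 0)) {g : ℝ → ℝ} {a c : ℝ}
    (hg : ContinuousOn g (Set.Icc a c)) :
    IntegrableOn (fun s => b (g s)) (Set.Icc a c) := by
  obtain ⟨M, hM⟩ := isCompact_Icc.exists_bound_of_continuousOn hg
  have hmeas : AEStronglyMeasurable (fun s => b (g s)) (volume.restrict (Set.Icc a c)) :=
    (hbmeas.comp_aemeasurable (hg.aemeasurable measurableSet_Icc)).aestronglyMeasurable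
  refine Integrable.mono' (integrable_const (max (b M) (b (-M)))) hmeas ?_
  filter_upwards [ae_restrict_mem measurableSet_Icc] with s hs
  rw [Real.norm_eq_abs, abs_of_nonneg (hbnonneg _)]
  exact apply_le_max_of_abs_le hbmono hbanti (hM s hs)

end

lemma monotoneOn_integral_of_nonneg {f : ℝ → ℝ} {a c : ℝ} (hf : ∀ x, 0 ≤ f x)
    (hfi : IntegrableOn f (Set.Icc a c)) : MonotoneOn (fun t => ∫ s in a..t, f s) (Set.Icc a c) :=
  fun _ hs _ ht hst =>
    integral_mono_interval le_rfl hs.1 hst (.of_forall hf)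
      (hfi.mono_set
        (Set.uIcc_subset_Icc (Set.left_mem_Icc.2 (ht.1.trans ht.2)) ht)).intervalIntegrable

theorem stmt0_general (T : ℝ) (b : ℝ → ℝ) (hbmeas : Measurable b)
    (hb0 : b 0 = 0)
    (hbnonneg : ∀ x, 0 ≤ x → 0 ≤ b x)
    (hbmono : MonotoneOn b (Set.Ici (0 : ℝ)))
    (hbanti : AntitoneOn b (Set.Iic (0 : ℝ)))
    (ω : ℝ → ℝ) (hω : ContinuousOn ω (Set.Icc 0 T))
    (y : ℝ → ℝ) (hy : ContinuousOn y (Set.Icc 0 T))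
    (hsol : ∀ t ∈ Set.Icc (0 : ℝ) T, y t = ∫ s in (0 : ℝ)..t, b (y s + ω s)) :
    (∀ t ∈ Set.Icc (0 : ℝ) T, 0 ≤ y t) ∧ MonotoneOn y (Set.Icc (0 : ℝ) T) := by
  have hbpos := nonneg_of_antitoneOn_Iic hb0 hbnonneg hbanti
  have hint : IntegrableOn (fun s => b (y s + ω s)) (Set.Icc 0 T) :=
    integrableOn_comp_of_monotoneOn_antitoneOn hbmeas hbpos hbmono hbanti (hy.add hω)
  refine ⟨fun t ht => hsol t ht ▸ integral_nonneg ht.1 fun s _ => hbpos _, ?_⟩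
  intro s hs t ht hst
  rw [hsol s hs, hsol t ht]
  exact monotoneOn_integral_of_nonneg (fun _ => hbpos _) hint hs ht hst

/-- Under H1, H2 (with nonnegativity), H4, H5, any continuous solution of
`y t = ∫₀ᵗ b (y s + ω s) ds` is non-negative and non-decreasing on `[0,T]`. -/
theorem stmt0 (T : ℝ) (hT : 0 ≤ T) (b : ℝ → ℝ) (hbmeas : Measurable b)
    (hb0 : b 0 = 0)
    (hbnonneg : ∀ x, 0 ≤ x → 0 ≤ b x)
    (hbmono : MonotoneOn b (Set.Ici (0 : ℝ)))
    (hbanti : AntitoneOn b (Set.Iic (0 : ℝ)))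
    (hb4 : ∀ x : ℝ, b |x| ≤ b (-|x|))
    (ω : ℝ → ℝ) (hω : ContinuousOn ω (Set.Icc 0 T)) (hω0 : ω 0 = 0)
    (y : ℝ → ℝ) (hy : ContinuousOn y (Set.Icc 0 T))
    (hsol : ∀ t ∈ Set.Icc (0 : ℝ) T, y t = ∫ s in (0 : ℝ)..t, b (y s + ω s)) :
    (∀ t ∈ Set.Icc (0 : ℝ) T, 0 ≤ y t) ∧ MonotoneOn y (Set.Icc (0 : ℝ) T) :=
  stmt0_general T b hbmeas hb0 hbnonneg hbmono hbanti ω hω y hy hsol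
end

section
/- Under hypotheses H1–H5 (b(0)=0; b non-decreasing on (0,∞); b continuous on [0,∞) and C¹ with b' non-increasing on (0,∞); b(|x|) ≤ b(-|x|); b non-increasing on (-∞,0]), for any two solutions y ≤ ȳ of y_t = ∫₀ᵗ b(y_s + ω_s) ds with ω continuous, ω₀ = 0, one has for every t ∈ [0,T]: b(ȳ_t + ω_t) − b(y_t + ω_t) ≤ (ȳ_t − y_t) · b'(|y_t + ω_t|+), where b'(z+) denotes the right limit of b' at z (possibly infinite at 0). -/
/-!
Write `u = y t + ω t ≤ v = ȳ t + ω t`. Since `b'` is antitone, `b' ≤ b'(|u|+)` on `(|u|, ∞)`,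
so by the mean value theorem `b` grows at most at rate `b'(|u|+)` on `[|u|, ∞)`. If `u ≥ 0`
this bounds `b v - b u` directly. If `u < 0`, H4 and H5 make `b u` the maximum of `b` on
`[u, -u]`: either `v ≤ -u` and `b v - b u ≤ 0`, or `b v - b u ≤ b v - b (-u)` and the mean
value theorem applies on `[-u, v]`.
-/

open MeasureTheory intervalIntegral Filter Topology Set

lemma AntitoneOn.le_of_tendsto_nhdsGT {α β : Type*} [TopologicalSpace α] [LinearOrder α]
    [OrderTopology α] [DenselyOrdered α] [TopologicalSpace β] [Preorder β] [ClosedIciTopology β]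
    {f : α → β} {z x : α} {L : β} (hf : AntitoneOn f (Ioi z))
    (hL : Tendsto f (𝓝[>] z) (𝓝 L)) (hx : z < x) : f x ≤ L := by
  have : (𝓝[>] z).NeBot := nhdsGT_neBot_of_exists_gt ⟨x, hx⟩
  refine ge_of_tendsto hL ?_
  filter_upwards [Ioo_mem_nhdsGT hx] with w hw
  exact hf hw.1 (hw.1.trans hw.2) hw.2.le

lemma HasDerivAt.nonneg_of_monotoneOn_of_isOpen {g : ℝ → ℝ} {g' x : ℝ} {s : Set ℝ}
    (hd : HasDerivAt g g' x) (hg : MonotoneOn g s) (hs : IsOpen s) (hx : x ∈ s) : 0 ≤ g' := by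
  rw [← hd.hasDerivWithinAt.derivWithin (hs.uniqueDiffOn x hx)]
  exact hg.derivWithin_nonneg

lemma sub_le_mul_sub_of_hasDerivAt_le {f f' : ℝ → ℝ} {z M u v : ℝ}
    (hf : ContinuousOn f (Ici z)) (hf' : ∀ x ∈ Ioi z, HasDerivAt f (f' x) x)
    (hM : ∀ x ∈ Ioi z, f' x ≤ M) (hzu : z ≤ u) (huv : u ≤ v) :
    f v - f u ≤ M * (v - u) := by
  refine (convex_Ici z).image_sub_le_mul_sub_of_deriv_le hf ?_ ?_ u hzu v (hzu.trans huv) huv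
  · rw [interior_Ici]
    exact fun x hx => (hf' x hx).differentiableAt.differentiableWithinAt
  · rw [interior_Ici]
    exact fun x hx => (hf' x hx).deriv ▸ hM x hx

section

variable {b b' : ℝ → ℝ}

lemma apply_le_apply_of_mem_Icc_neg (hbmono : MonotoneOn b (Ioi 0))
    (hb4 : ∀ x : ℝ, b |x| ≤ b (-|x|)) (hb5 : AntitoneOn b (Iic 0)) {u v : ℝ}
    (hv : v ∈ Icc u (-u)) : b v ≤ b u := by
  have hu : u ≤ 0 := by linarith [hv.1, hv.2]
  rcases le_or_gt v 0 with hv0 | hv0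
  · exact hb5 hu hv0 hv.1
  · calc b v ≤ b (-u) := hbmono hv0 (hv0.trans_le hv.2) hv.2
      _ ≤ b u := by simpa [abs_of_nonpos hu] using hb4 u

lemma sub_le_mul_sub_of_deriv_le_on_Ioi_abs (hbmono : MonotoneOn b (Ioi 0))
    (hbcont : ContinuousOn b (Ici 0)) (hbderiv : ∀ x ∈ Ioi (0 : ℝ), HasDerivAt b (b' x) x)
    (hb4 : ∀ x : ℝ, b |x| ≤ b (-|x|)) (hb5 : AntitoneOn b (Iic 0)) {u v M : ℝ} (huv : u ≤ v)
    (hM0 : 0 ≤ M) (hM : ∀ x ∈ Ioi |u|, b' x ≤ M) :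
    b v - b u ≤ M * (v - u) := by
  have mvt : ∀ {s w : ℝ}, |u| ≤ s → s ≤ w → b w - b s ≤ M * (w - s) := fun hs hsw =>
    sub_le_mul_sub_of_hasDerivAt_le (hbcont.mono (Ici_subset_Ici.2 (abs_nonneg u)))
      (fun x hx => hbderiv x ((abs_nonneg u).trans_lt hx)) hM hs hsw
  rcases le_or_gt 0 u with hu | hu
  · exact mvt (abs_of_nonneg hu).le huv
  rcases le_or_gt v (-u) with hv | hv
  · have := apply_le_apply_of_mem_Icc_neg hbmono hb4 hb5 ⟨huv, hv⟩
    nlinarith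
  · have h₁ := mvt (abs_of_neg hu).le hv.le
    have h₂ := apply_le_apply_of_mem_Icc_neg hbmono hb4 hb5 (u := u) ⟨by linarith, le_rfl⟩
    nlinarith

lemma apply_sub_apply_le_sub_mul_rightLim (hbmono : MonotoneOn b (Ioi 0))
    (hbcont : ContinuousOn b (Ici 0)) (hbderiv : ∀ x ∈ Ioi (0 : ℝ), HasDerivAt b (b' x) x)
    (hb'anti : AntitoneOn b' (Ioi 0)) (hb4 : ∀ x : ℝ, b |x| ≤ b (-|x|))
    (hb5 : AntitoneOn b (Iic 0)) {D : ℝ → EReal}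
    (hD : ∀ z : ℝ, 0 ≤ z → Tendsto (fun x => (b' x : EReal)) (𝓝[>] z) (𝓝 (D z)))
    {u v : ℝ} (huv : u ≤ v) :
    (b v - b u : EReal) ≤ (v - u : ℝ) * D |u| := by
  have hz : 0 ≤ |u| := abs_nonneg u
  have hb'D : ∀ x ∈ Ioi |u|, (b' x : EReal) ≤ D |u| := fun x hx =>
    (EReal.coe_strictMono.monotone.comp_antitoneOn
      (hb'anti.mono (Ioi_subset_Ioi hz))).le_of_tendsto_nhdsGT (hD |u| hz) hx
  have hD0 : 0 ≤ D |u| := by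
    have hpos : (0 : ℝ) < |u| + 1 := by linarith
    exact (EReal.coe_nonneg.2 ((hbderiv _ hpos).nonneg_of_monotoneOn_of_isOpen hbmono
      isOpen_Ioi hpos)).trans (hb'D _ (lt_add_one |u|))
  rcases huv.eq_or_lt with rfl | hlt
  · simp
  generalize D |u| = d at hb'D hD0 ⊢
  induction d using EReal.rec with
  | bot => exact absurd hD0 (by simp)
  | top => rw [EReal.mul_top_of_pos (by exact_mod_cast sub_pos.2 hlt)]; exact le_top
  | coe M =>
    rw [← EReal.coe_sub, ← EReal.coe_mul, EReal.coe_le_coe_iff, mul_comm]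
    exact sub_le_mul_sub_of_deriv_le_on_Ioi_abs hbmono hbcont hbderiv hb4 hb5 huv
      (EReal.coe_nonneg.1 hD0) fun x hx => EReal.coe_le_coe_iff.1 (hb'D x hx)

end

theorem stmt1_general (T : ℝ) (b b' : ℝ → ℝ)
    (hbmono : MonotoneOn b (Set.Ioi (0 : ℝ)))
    (hbcont : ContinuousOn b (Set.Ici (0 : ℝ)))
    (hbderiv : ∀ x ∈ Set.Ioi (0 : ℝ), HasDerivAt b (b' x) x)
    (hb'anti : AntitoneOn b' (Set.Ioi (0 : ℝ)))
    (hb4 : ∀ x : ℝ, b |x| ≤ b (-|x|))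
    (hb5 : AntitoneOn b (Set.Iic (0 : ℝ)))
    (D : ℝ → EReal)
    (hD : ∀ z : ℝ, 0 ≤ z → Tendsto (fun x => (b' x : EReal)) (𝓝[>] z) (𝓝 (D z)))
    (ω : ℝ → ℝ)
    (y ybar : ℝ → ℝ)
    (hle : ∀ t ∈ Set.Icc (0 : ℝ) T, y t ≤ ybar t) :
    ∀ t ∈ Set.Icc (0 : ℝ) T,
      (b (ybar t + ω t) - b (y t + ω t) : EReal) ≤
        (ybar t - y t : ℝ) * D |y t + ω t| := by
  intro t ht
  have key := apply_sub_apply_le_sub_mul_rightLim hbmono hbcont hbderiv hb'anti hb4 hb5 hD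
    (u := y t + ω t) (v := ybar t + ω t) (by linarith [hle t ht])
  rwa [add_sub_add_right_eq_sub] at key

/-- Lemma 2.1, first inequality: under H1–H5, for two solutions `y ≤ ȳ` of
`y t = ∫₀ᵗ b (y s + ω s) ds`, one has
`b (ȳ t + ω t) - b (y t + ω t) ≤ (ȳ t - y t) * b'(|y t + ω t|+)`,
where `D z = b'(z+)` is the right limit (in `EReal`, possibly infinite at `0`) of the
derivative `b'` of `b` at `z`. -/
theorem stmt1 (T : ℝ) (hT : 0 ≤ T) (b b' : ℝ → ℝ)
    (hb0 : b 0 = 0)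
    (hbmono : MonotoneOn b (Set.Ioi (0 : ℝ)))
    (hbcont : ContinuousOn b (Set.Ici (0 : ℝ)))
    (hbderiv : ∀ x ∈ Set.Ioi (0 : ℝ), HasDerivAt b (b' x) x)
    (hb'cont : ContinuousOn b' (Set.Ioi (0 : ℝ)))
    (hb'anti : AntitoneOn b' (Set.Ioi (0 : ℝ)))
    (hb4 : ∀ x : ℝ, b |x| ≤ b (-|x|))
    (hb5 : AntitoneOn b (Set.Iic (0 : ℝ)))
    (D : ℝ → EReal)
    (hD : ∀ z : ℝ, 0 ≤ z → Tendsto (fun x => (b' x : EReal)) (𝓝[>] z) (𝓝 (D z)))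
    (ω : ℝ → ℝ) (hω : ContinuousOn ω (Set.Icc 0 T)) (hω0 : ω 0 = 0)
    (hωne : ∃ t ∈ Set.Icc (0 : ℝ) T, ω t ≠ 0)
    (y ybar : ℝ → ℝ)
    (hy : ContinuousOn y (Set.Icc 0 T)) (hybar : ContinuousOn ybar (Set.Icc 0 T))
    (hsoly : ∀ t ∈ Set.Icc (0 : ℝ) T, y t = ∫ s in (0 : ℝ)..t, b (y s + ω s))
    (hsolybar : ∀ t ∈ Set.Icc (0 : ℝ) T, ybar t = ∫ s in (0 : ℝ)..t, b (ybar s + ω s))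
    (hle : ∀ t ∈ Set.Icc (0 : ℝ) T, y t ≤ ybar t) :
    ∀ t ∈ Set.Icc (0 : ℝ) T,
      (b (ybar t + ω t) - b (y t + ω t) : EReal) ≤
        (ybar t - y t : ℝ) * D |y t + ω t| :=
  stmt1_general T b b' hbmono hbcont hbderiv hb'anti hb4 hb5 D hD ω y ybar hle
end

section
/- Under hypotheses H1–H5, if y ≤ ȳ are two solutions of y_t = ∫₀ᵗ b(y_s + ω_s) ds and t is such that ω_t ≥ 0, then b(ȳ_t + ω_t) − b(y_t + ω_t) ≤ (ȳ_t − y_t) · b'((ω_t + ∫₀ᵗ 1_{ω_s>0} b(ω_s) ds)+). -/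
open MeasureTheory intervalIntegral Filter Topology

/-- Lemma 2.1, second inequality, case `ω t ≥ 0`: under H1–H5, for two
solutions `y ≤ ȳ` of `y t = ∫₀ᵗ b (y s + ω s) ds` and `t` with `ω t ≥ 0`,
`b (ȳ t + ω t) - b (y t + ω t) ≤ (ȳ t - y t) * b'((ω t + ∫₀ᵗ 1_{ω s > 0} b (ω s) ds)+)`,
where `D z = b'(z+)` is the right limit (in `EReal`) of `b'` at `z`. -/
theorem stmt2 (T : ℝ) (hT : 0 ≤ T) (b b' : ℝ → ℝ)
    (hb0 : b 0 = 0)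
    (hbmono : MonotoneOn b (Set.Ioi (0 : ℝ)))
    (hbcont : ContinuousOn b (Set.Ici (0 : ℝ)))
    (hbderiv : ∀ x ∈ Set.Ioi (0 : ℝ), HasDerivAt b (b' x) x)
    (hb'cont : ContinuousOn b' (Set.Ioi (0 : ℝ)))
    (hb'anti : AntitoneOn b' (Set.Ioi (0 : ℝ)))
    (hb4 : ∀ x : ℝ, b |x| ≤ b (-|x|))
    (hb5 : AntitoneOn b (Set.Iic (0 : ℝ)))
    (D : ℝ → EReal)
    (hD : ∀ z : ℝ, 0 ≤ z → Tendsto (fun x => (b' x : EReal)) (𝓝[>] z) (𝓝 (D z)))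
    (ω : ℝ → ℝ) (hω : ContinuousOn ω (Set.Icc 0 T)) (hω0 : ω 0 = 0)
    (hωne : ∃ t ∈ Set.Icc (0 : ℝ) T, ω t ≠ 0)
    (y ybar : ℝ → ℝ)
    (hy : ContinuousOn y (Set.Icc 0 T)) (hybar : ContinuousOn ybar (Set.Icc 0 T))
    (hsoly : ∀ t ∈ Set.Icc (0 : ℝ) T, y t = ∫ s in (0 : ℝ)..t, b (y s + ω s))
    (hsolybar : ∀ t ∈ Set.Icc (0 : ℝ) T, ybar t = ∫ s in (0 : ℝ)..t, b (ybar s + ω s))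
    (hle : ∀ t ∈ Set.Icc (0 : ℝ) T, y t ≤ ybar t) :
    ∀ t ∈ Set.Icc (0 : ℝ) T, 0 ≤ ω t →
      (b (ybar t + ω t) - b (y t + ω t) : EReal) ≤
        (ybar t - y t : ℝ) *
          D (ω t + ∫ s in (0 : ℝ)..t, if 0 < ω s then b (ω s) else 0) := by
  -- b is nonnegative everywhere
  have hbnn : ∀ x : ℝ, 0 ≤ b x := by
    intro x
    rcases le_or_gt x 0 with hx | hx
    · simpa [hb0] using hb5 (Set.mem_Iic.2 hx) (Set.mem_Iic.2 le_rfl) hx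
    · by_contra hneg
      push_neg at hneg
      have hcont0 : Tendsto b (𝓝[>] (0:ℝ)) (𝓝 0) := by
        have h1 : Tendsto b (𝓝[Set.Ici (0:ℝ)] 0) (𝓝 (b 0)) := hbcont 0 Set.self_mem_Ici
        rw [hb0] at h1
        exact h1.mono_left (nhdsWithin_mono _ Set.Ioi_subset_Ici_self)
      have hev : ∀ᶠ u in 𝓝[>] (0:ℝ), b x < b u :=
        hcont0.eventually (eventually_gt_nhds hneg)
      have hev2 : ∀ᶠ u in 𝓝[>] (0:ℝ), b u ≤ b x := by
        filter_upwards [Ioo_mem_nhdsGT_of_mem (Set.mem_Ico.2 ⟨le_rfl, hx⟩)] with u hu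
        exact hbmono (Set.mem_Ioi.2 hu.1) (Set.mem_Ioi.2 hx) hu.2.le
      obtain ⟨u, hu1, hu2⟩ := (hev.and hev2).exists
      exact absurd hu2 (not_le.2 hu1)
  -- b is measurable
  have hmono : Monotone (fun x : ℝ => if 0 < x then b x else 0) := by
    intro u v huv
    by_cases hu : 0 < u
    · have hv : 0 < v := lt_of_lt_of_le hu huv
      simpa [hu, hv] using hbmono (Set.mem_Ioi.2 hu) (Set.mem_Ioi.2 hv) huv
    · by_cases hv : 0 < v
      · simpa [hu, hv] using hbnn v
      · simp [hu, hv]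
  have hanti : Antitone (fun x : ℝ => if 0 < x then 0 else b x) := by
    intro u v huv
    by_cases hv : 0 < v
    · by_cases hu : 0 < u
      · simp [hu, hv]
      · simpa [hu, hv] using hbnn u
    · have hu : ¬ 0 < u := fun h => hv (h.trans_le huv)
      simpa [hu, hv] using hb5 (Set.mem_Iic.2 (not_lt.1 hu)) (Set.mem_Iic.2 (not_lt.1 hv)) huv
  have hmeasb : Measurable b := by
    have hbe : b = fun x => (if 0 < x then b x else 0) + (if 0 < x then 0 else b x) := by
      funext x; by_cases hx : 0 < x <;> simp [hx]
    rw [hbe]; exact hmono.measurable.add hanti.measurable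
  -- bounds
  obtain ⟨M1, hM1⟩ := (isCompact_Icc (a := (0:ℝ)) (b := T)).exists_bound_of_continuousOn
    ((hy.add hω))
  obtain ⟨M2, hM2⟩ := (isCompact_Icc (a := (0:ℝ)) (b := T)).exists_bound_of_continuousOn hω
  set M : ℝ := max M1 M2 with hM
  have hbound : ∀ x : ℝ, |x| ≤ M → b x ≤ max (b (-(M+1))) (b (M+1)) := by
    intro x hx
    rcases le_or_gt x 0 with h | h
    · refine le_trans (hb5 (Set.mem_Iic.2 (by linarith [abs_nonneg x, neg_abs_le x])) (Set.mem_Iic.2 h) (by linarith [neg_abs_le x])) (le_max_left _ _)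
    · exact le_trans (hbmono (Set.mem_Ioi.2 h) (Set.mem_Ioi.2 (by linarith [abs_nonneg x])) (by linarith [le_abs_self x])) (le_max_right _ _)
  set C : ℝ := max (b (-(M+1))) (b (M+1)) with hC
  -- integrability of the two integrands
  have hfint : ∀ τ ∈ Set.Icc (0:ℝ) T, IntervalIntegrable (fun s => b (y s + ω s)) volume 0 τ := by
    intro τ hτ
    rw [intervalIntegrable_iff_integrableOn_Ioc_of_le hτ.1]
    have hsub : Set.Ioc (0:ℝ) τ ⊆ Set.Icc 0 T := fun s hs => ⟨hs.1.le, hs.2.trans hτ.2⟩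
    have haem : AEMeasurable (fun s => y s + ω s) (volume.restrict (Set.Ioc (0:ℝ) τ)) :=
      ((hy.add hω).mono hsub).aemeasurable measurableSet_Ioc
    refine (integrable_const C).mono' (hmeasb.comp_aemeasurable haem).aestronglyMeasurable ?_
    rw [ae_restrict_iff' measurableSet_Ioc]
    filter_upwards with s hs
    have h1 : |y s + ω s| ≤ M := le_trans (by simpa using hM1 s (hsub hs)) (le_max_left _ _)
    rw [Real.norm_eq_abs, abs_of_nonneg (hbnn _)]
    exact hbound _ h1
  have hgint : ∀ τ ∈ Set.Icc (0:ℝ) T,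
      IntervalIntegrable (fun s => if 0 < ω s then b (ω s) else 0) volume 0 τ := by
    intro τ hτ
    rw [intervalIntegrable_iff_integrableOn_Ioc_of_le hτ.1]
    have hsub : Set.Ioc (0:ℝ) τ ⊆ Set.Icc 0 T := fun s hs => ⟨hs.1.le, hs.2.trans hτ.2⟩
    have haem : AEMeasurable ω (volume.restrict (Set.Ioc (0:ℝ) τ)) :=
      (hω.mono hsub).aemeasurable measurableSet_Ioc
    have hcomp : (fun s => if 0 < ω s then b (ω s) else 0)
        = (fun x : ℝ => if 0 < x then b x else 0) ∘ ω := rfl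
    rw [hcomp]
    refine (integrable_const (max C 0)).mono'
      (hmono.measurable.comp_aemeasurable haem).aestronglyMeasurable ?_
    rw [ae_restrict_iff' measurableSet_Ioc]
    filter_upwards with s hs
    have h2 : |ω s| ≤ M := le_trans (by simpa using hM2 s (hsub hs)) (le_max_right _ _)
    by_cases h : 0 < ω s
    · simp only [Function.comp_apply, if_pos h]
      rw [Real.norm_eq_abs, abs_of_nonneg (hbnn _)]
      exact le_trans (hbound _ h2) (le_max_left _ _)
    · simp [Function.comp_apply, if_neg h, le_max_right]
  -- nonnegativity of y
  have hynn : ∀ s ∈ Set.Icc (0:ℝ) T, 0 ≤ y s := by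
    intro s hs
    rw [hsoly s hs]
    exact intervalIntegral.integral_nonneg hs.1 (fun u _ => hbnn _)
  intro t ht hωt
  -- the key comparison of integrals
  have hIle : (∫ s in (0:ℝ)..t, if 0 < ω s then b (ω s) else 0) ≤ y t := by
    rw [hsoly t ht]
    refine intervalIntegral.integral_mono_on ht.1 (hgint t ht) (hfint t ht) ?_
    intro s hs
    have hsT : s ∈ Set.Icc (0:ℝ) T := ⟨hs.1, hs.2.trans ht.2⟩
    by_cases h : 0 < ω s
    · rw [if_pos h]
      exact hbmono (Set.mem_Ioi.2 h) (Set.mem_Ioi.2 (by linarith [hynn s hsT]))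
        (by linarith [hynn s hsT])
    · rw [if_neg h]; exact hbnn _
  have hInn : 0 ≤ ∫ s in (0:ℝ)..t, if 0 < ω s then b (ω s) else 0 :=
    intervalIntegral.integral_nonneg ht.1
      (fun u _ => by by_cases h : 0 < ω u <;> simp [h, hbnn])
  set c : ℝ := ω t + ∫ s in (0:ℝ)..t, if 0 < ω s then b (ω s) else 0 with hc
  set A : ℝ := y t + ω t with hA
  set B : ℝ := ybar t + ω t with hB
  have hc0 : 0 ≤ c := by positivity
  have hcA : c ≤ A := by rw [hc, hA]; linarith
  have hAB : A ≤ B := add_le_add_left (hle t ht) _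
  have hA0 : 0 ≤ A := by rw [hA]; linarith [hynn t ht]
  -- D dominates b' to the right
  have hDge : ∀ z : ℝ, 0 ≤ z → ∀ x, z < x → (b' x : EReal) ≤ D z := by
    intro z hz x hx
    obtain ⟨w, hw1, hw2⟩ := exists_between hx
    have h1 : ∀ᶠ u in 𝓝[>] z, (b' w : EReal) ≤ (b' u : EReal) := by
      filter_upwards [Ioo_mem_nhdsGT_of_mem (Set.mem_Ico.2 ⟨le_rfl, hw1⟩)] with u hu
      exact_mod_cast hb'anti (Set.mem_Ioi.2 (lt_of_le_of_lt hz hu.1))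
        (Set.mem_Ioi.2 (lt_of_le_of_lt hz hw1)) hu.2.le
    have h2 : (b' w : EReal) ≤ D z := ge_of_tendsto (hD z hz) h1
    refine le_trans ?_ h2
    exact_mod_cast hb'anti (Set.mem_Ioi.2 (lt_of_le_of_lt hz hw1))
      (Set.mem_Ioi.2 (lt_of_le_of_lt hz hx)) hw2.le
  have hDbot : D c ≠ ⊥ := by
    intro hbot
    have := hDge c hc0 (c+1) (by linarith)
    rw [hbot] at this
    exact absurd (le_bot_iff.1 this) (EReal.coe_ne_bot _)
  rcases eq_or_lt_of_le hAB with heq | hlt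
  · -- equality case: both sides are 0 (after multiplying by 0)
    have h0 : (ybar t - y t : ℝ) = 0 := by
      have : y t + ω t = ybar t + ω t := heq
      linarith
    rw [h0, ← heq, ← EReal.coe_sub]
    simp
  · -- strict case
    have hBA : (0:ℝ) < B - A := by linarith
    have hyy : ybar t - y t = B - A := by rw [hA, hB]; ring
    by_cases htop : D c = ⊤
    · rw [hyy, htop, EReal.mul_top_of_pos (EReal.coe_pos.2 hBA)]
      exact le_top
    · -- finite right derivative r
      obtain ⟨r, hDc⟩ : ∃ r : ℝ, D c = (r : EReal) :=
        ⟨(D c).toReal, (EReal.coe_toReal htop hDbot).symm⟩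
      have hb'le : ∀ ξ, A < ξ → b' ξ ≤ r := by
        intro ξ hξ
        have := hDge c hc0 ξ (lt_of_le_of_lt hcA hξ)
        rw [hDc] at this
        exact_mod_cast this
      have hx : ∀ x ∈ Set.Ioo A B, b B - b x ≤ r * (B - x) := by
        intro x hxm
        obtain ⟨ξ, hξm, hξ⟩ := exists_hasDerivAt_eq_slope b b' hxm.2
          (hbcont.mono (fun u hu => le_trans (le_trans hA0 hxm.1.le) hu.1))
          (fun u hu => hbderiv u (Set.mem_Ioi.2 (lt_of_le_of_lt hA0 (hxm.1.trans hu.1))))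
        have h1 : b' ξ ≤ r := hb'le ξ (hxm.1.trans hξm.1)
        have h2 : b B - b x = b' ξ * (B - x) := by
          rw [hξ, div_mul_cancel₀]
          exact ne_of_gt (by linarith [hxm.2])
        rw [h2]
        exact mul_le_mul_of_nonneg_right h1 (by linarith [hxm.2])
      -- pass to the limit x → A⁺
      have hT1 : Tendsto (fun x => b B - b x) (𝓝[>] A) (𝓝 (b B - b A)) := by
        have h1 : Tendsto b (𝓝[Set.Ici (0:ℝ)] A) (𝓝 (b A)) := hbcont A hA0
        have h2 : Tendsto b (𝓝[>] A) (𝓝 (b A)) :=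
          h1.mono_left (nhdsWithin_mono _ (fun u hu => le_trans hA0 (le_of_lt hu)))
        exact tendsto_const_nhds.sub h2
      have hT2 : Tendsto (fun x => r * (B - x)) (𝓝[>] A) (𝓝 (r * (B - A))) := by
        have hcts : Continuous (fun x : ℝ => r * (B - x)) :=
          continuous_const.mul (continuous_const.sub continuous_id)
        exact (hcts.tendsto A).mono_left nhdsWithin_le_nhds
      have hev : ∀ᶠ x in 𝓝[>] A, b B - b x ≤ r * (B - x) := by
        filter_upwards [Ioo_mem_nhdsGT_of_mem (Set.mem_Ico.2 ⟨le_rfl, hlt⟩)] with x hxm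
        exact hx x hxm
      have hreal : b B - b A ≤ r * (B - A) := le_of_tendsto_of_tendsto hT1 hT2 hev
      rw [hyy]
      have hcoe : ((B - A : ℝ) : EReal) * ((r : ℝ) : EReal) = (((B - A) * r : ℝ) : EReal) :=
        (EReal.coe_mul _ _).symm
      rw [hDc, hcoe]
      have : (b B - b A : ℝ) ≤ (B - A) * r := by linarith [hreal]
      calc (b B : EReal) - (b A : EReal) = ((b B - b A : ℝ) : EReal) := by
            rw [EReal.coe_sub]
        _ ≤ (((B - A) * r : ℝ) : EReal) := EReal.coe_le_coe_iff.2 this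
end

section
/- (Gronwall-type comparison, Pachpatte) Let f, g, h : [0,T] → ℝ be continuous, k : [0,T] × ℝ → ℝ measurable, non-decreasing in the second variable, and satisfying k(t, ȳ) − k(t, y) ≤ a(t)(ȳ − y) for all y ≤ ȳ, with a : [0,T] → ℝ integrable. If f(t) ≤ h(t) + ∫₀ᵗ k(s, f(s)) ds and g(t) ≥ h(t) + ∫₀ᵗ k(s, g(s)) ds for all t ∈ [0,T], then f(t) ≤ g(t) for all t ∈ [0,T]. -/
/-!
Put `ψ = max (f - g) 0`. Where `f ≤ g` monotonicity of `k` makes `k(s, f) - k(s, g)` nonpositive,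
elsewhere the one-sided Lipschitz bound applies, so `ψ t ≤ ∫₀ᵗ |a| ψ`. This integral Gronwall
inequality with zero initial value forces `ψ = 0`: the set where `W t = ∫₀ᵗ |a| ψ` vanishes is
closed, and it extends to the right of each of its points `x`, because on a short interval
`[x, y]` with `∫ₓʸ |a| < 1` we get `W y ≤ (∫ₓʸ |a|) * W y`.
-/

open MeasureTheory intervalIntegral

open Set Filter Topology

section IntegralGronwall

variable {f : ℝ → ℝ} {a b : ℝ}

lemma MeasureTheory.IntegrableOn.intervalIntegrable_of_mem_Icc (hf : IntegrableOn f (Icc a b))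
    {x y : ℝ} (hx : x ∈ Icc a b) (hy : y ∈ Icc a b) : IntervalIntegrable f volume x y :=
  (hf.mono_set (uIcc_subset_Icc hx hy)).intervalIntegrable

lemma monotoneOn_primitive_of_nonneg (hf : IntegrableOn f (Icc a b))
    (hf0 : ∀ t ∈ Icc a b, 0 ≤ f t) : MonotoneOn (fun t => ∫ s in a..t, f s) (Icc a b) := by
  intro x hx y hy hxy
  show ∫ s in a..x, f s ≤ ∫ s in a..y, f s
  have ha : a ∈ Icc a b := ⟨le_rfl, hx.1.trans hx.2⟩
  rw [← integral_add_adjacent_intervals (hf.intervalIntegrable_of_mem_Icc ha hx)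
    (hf.intervalIntegrable_of_mem_Icc hx hy)]
  have : 0 ≤ ∫ s in x..y, f s :=
    integral_nonneg hxy fun s hs => hf0 s ⟨hx.1.trans hs.1, hs.2.trans hy.2⟩
  linarith

lemma eventually_intervalIntegral_lt (hf : IntegrableOn f (Icc a b)) (hab : a < b) {ε : ℝ}
    (hε : 0 < ε) : ∀ᶠ y in 𝓝[>] a, ∫ s in a..y, f s < ε := by
  have hcont : ContinuousOn (fun y => ∫ s in a..y, f s) (uIcc a b) :=
    continuousOn_primitive_interval (by rwa [uIcc_of_le hab.le])
  have hlim : Tendsto (fun y => ∫ s in a..y, f s) (𝓝[Icc a b] a) (𝓝 0) := by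
    simpa [uIcc_of_le hab.le] using (hcont a left_mem_uIcc).tendsto
  exact nhdsWithin_le_of_mem (Icc_mem_nhdsGT hab) (hlim.eventually (gt_mem_nhds hε))

variable {c u : ℝ → ℝ}

theorem eqOn_zero_of_le_integral_mul (hc : IntegrableOn c (Icc a b))
    (hc0 : ∀ t ∈ Icc a b, 0 ≤ c t) (hcu : IntegrableOn (fun t => c t * u t) (Icc a b))
    (hu0 : ∀ t ∈ Icc a b, 0 ≤ u t) (hle : ∀ t ∈ Icc a b, u t ≤ ∫ s in a..t, c s * u s) :
    EqOn u 0 (Icc a b) := by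
  set w : ℝ → ℝ := fun t => ∫ s in a..t, c s * u s
  have hw_mono : MonotoneOn w (Icc a b) :=
    monotoneOn_primitive_of_nonneg hcu fun t ht => mul_nonneg (hc0 t ht) (hu0 t ht)
  intro t ht
  have hab : a ≤ b := ht.1.trans ht.2
  suffices Icc a b ⊆ {t | w t ≤ 0} from le_antisymm ((hle t ht).trans (this ht)) (hu0 t ht)
  refine IsClosed.Icc_subset_of_forall_mem_nhdsWithin ?_ (by simp [w]) ?_
  · have hw : ContinuousOn w (uIcc a b) :=
      continuousOn_primitive_interval (by rwa [uIcc_of_le hab])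
    rw [uIcc_of_le hab] at hw
    rw [inter_comm]
    exact hw.preimage_isClosed_of_isClosed isClosed_Icc isClosed_Iic
  · rintro x ⟨hwx : w x ≤ 0, hx⟩
    have hxI : x ∈ Icc a b := Ico_subset_Icc_self hx
    filter_upwards [eventually_intervalIntegral_lt (hc.mono_set (Icc_subset_Icc_left hx.1)) hx.2
      one_pos, Ioo_mem_nhdsGT hx.2] with y hcy hy
    have hyI : y ∈ Icc a b := ⟨hx.1.trans hy.1.le, hy.2.le⟩
    have haI : a ∈ Icc a b := ⟨le_rfl, hab⟩
    have hsplit : w y = w x + ∫ s in x..y, c s * u s :=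
      (integral_add_adjacent_intervals (hcu.intervalIntegrable_of_mem_Icc haI hxI)
        (hcu.intervalIntegrable_of_mem_Icc hxI hyI)).symm
    have hstep : ∫ s in x..y, c s * u s ≤ (∫ s in x..y, c s) * w y := by
      rw [← intervalIntegral.integral_mul_const]
      refine integral_mono_on hy.1.le (hcu.intervalIntegrable_of_mem_Icc hxI hyI)
        ((hc.intervalIntegrable_of_mem_Icc hxI hyI).mul_const _) fun s hs => ?_
      have hsI : s ∈ Icc a b := ⟨hx.1.trans hs.1, hs.2.trans hy.2.le⟩
      exact mul_le_mul_of_nonneg_left ((hle s hsI).trans (hw_mono hsI hyI hs.2)) (hc0 s hsI)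
    have hcnn : 0 ≤ ∫ s in x..y, c s :=
      integral_nonneg hy.1.le fun s hs => hc0 s ⟨hx.1.trans hs.1, hs.2.trans hy.2.le⟩
    show w y ≤ 0
    by_contra! hpos
    nlinarith [mul_lt_mul_of_pos_right hcy hpos]
end IntegralGronwall


lemma sub_le_abs_mul_max_sub_zero {φ : ℝ → ℝ} {L : ℝ} (hφ : Monotone φ)
    (hlip : ∀ y ybar : ℝ, y ≤ ybar → φ ybar - φ y ≤ L * (ybar - y)) (x y : ℝ) :
    φ x - φ y ≤ |L| * max (x - y) 0 := by
  rcases le_total x y with hxy | hyx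
  · have := hφ hxy
    have : 0 ≤ |L| * max (x - y) 0 := mul_nonneg (abs_nonneg L) (le_max_right _ _)
    linarith
  · rw [max_eq_left (sub_nonneg.mpr hyx)]
    exact (hlip y x hyx).trans (mul_le_mul_of_nonneg_right (le_abs_self L) (sub_nonneg.mpr hyx))

theorem stmt3_general (T : ℝ) (f g h : ℝ → ℝ)
    (hf : ContinuousOn f (Set.Icc 0 T)) (hg : ContinuousOn g (Set.Icc 0 T))
    (k : ℝ → ℝ → ℝ)
    (hkmono : ∀ t ∈ Set.Icc (0 : ℝ) T, Monotone (k t))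
    (a : ℝ → ℝ) (ha : IntegrableOn a (Set.Icc 0 T))
    (hklip : ∀ t ∈ Set.Icc (0 : ℝ) T, ∀ y ybar : ℝ, y ≤ ybar →
      k t ybar - k t y ≤ a t * (ybar - y))
    (hkfint : IntervalIntegrable (fun s => k s (f s)) volume 0 T)
    (hkgint : IntervalIntegrable (fun s => k s (g s)) volume 0 T)
    (hfsub : ∀ t ∈ Set.Icc (0 : ℝ) T, f t ≤ h t + ∫ s in (0 : ℝ)..t, k s (f s))
    (hgsup : ∀ t ∈ Set.Icc (0 : ℝ) T, g t ≥ h t + ∫ s in (0 : ℝ)..t, k s (g s)) :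
    ∀ t ∈ Set.Icc (0 : ℝ) T, f t ≤ g t := by
  set ψ : ℝ → ℝ := fun s => max (f s - g s) 0
  have hψ : IntegrableOn (fun s => |a s| * ψ s) (Icc 0 T) :=
    IntegrableOn.mul_continuousOn ha.abs ((hf.sub hg).sup continuousOn_const) isCompact_Icc
  have hψ_le : ∀ t ∈ Icc 0 T, ψ t ≤ ∫ s in 0..t, |a s| * ψ s := by
    intro t ht
    have hsub : uIcc 0 t ⊆ uIcc 0 T := uIcc_subset_uIcc_left (Icc_subset_uIcc ht)
    have hkf := hkfint.mono_set hsub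
    have hkg := hkgint.mono_set hsub
    have hdiff : f t - g t ≤ ∫ s in 0..t, |a s| * ψ s :=
      calc f t - g t ≤ ∫ s in 0..t, (k s (f s) - k s (g s)) := by
            rw [integral_sub hkf hkg]; linarith [hfsub t ht, hgsup t ht]
        _ ≤ ∫ s in 0..t, |a s| * ψ s :=
            integral_mono_on ht.1 (hkf.sub hkg)
              (hψ.intervalIntegrable_of_mem_Icc (left_mem_Icc.mpr (ht.1.trans ht.2)) ht)
              fun s hs => sub_le_abs_mul_max_sub_zero (hkmono s ⟨hs.1, hs.2.trans ht.2⟩)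
                (hklip s ⟨hs.1, hs.2.trans ht.2⟩) _ _
    exact max_le hdiff
      (integral_nonneg ht.1 fun s _ => mul_nonneg (abs_nonneg _) (le_max_right _ _))
  intro t ht
  have hψ0 := eqOn_zero_of_le_integral_mul ha.abs (fun s _ => abs_nonneg (a s)) hψ
    (fun s _ => le_max_right _ _) hψ_le ht
  exact sub_nonpos.mp ((le_max_left _ _).trans hψ0.le)

/-- Pachpatte's Gronwall-type comparison: with `f, g, h` continuous on `[0,T]`,
`k` measurable, non-decreasing in its second argument and one-sidedly Lipschitz with
integrable coefficient `a`, if `f` is a subsolution and `g` a supersolution of the integral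
inequality with forcing `h`, then `f ≤ g` on `[0,T]`. -/
theorem stmt3 (T : ℝ) (hT : 0 ≤ T) (f g h : ℝ → ℝ)
    (hf : ContinuousOn f (Set.Icc 0 T)) (hg : ContinuousOn g (Set.Icc 0 T))
    (hh : ContinuousOn h (Set.Icc 0 T))
    (k : ℝ → ℝ → ℝ) (hk : Measurable (Function.uncurry k))
    (hkmono : ∀ t ∈ Set.Icc (0 : ℝ) T, Monotone (k t))
    (a : ℝ → ℝ) (ha : IntegrableOn a (Set.Icc 0 T))
    (hklip : ∀ t ∈ Set.Icc (0 : ℝ) T, ∀ y ybar : ℝ, y ≤ ybar →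
      k t ybar - k t y ≤ a t * (ybar - y))
    (hkfint : IntervalIntegrable (fun s => k s (f s)) volume 0 T)
    (hkgint : IntervalIntegrable (fun s => k s (g s)) volume 0 T)
    (hfsub : ∀ t ∈ Set.Icc (0 : ℝ) T, f t ≤ h t + ∫ s in (0 : ℝ)..t, k s (f s))
    (hgsup : ∀ t ∈ Set.Icc (0 : ℝ) T, g t ≥ h t + ∫ s in (0 : ℝ)..t, k s (g s)) :
    ∀ t ∈ Set.Icc (0 : ℝ) T, f t ≤ g t :=
  stmt3_general T f g h hf hg k hkmono a ha hklip hkfint hkgint hfsub hgsup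
end

section
/- Let b(x) = √x for x ≥ 0 and b(x) = √(−x) + 1 for x < 0, and define b_n(x) = √x − 1/n for x > 0, b_n(x) = √(−x) + 1 − 1/n for x < −1/n, and b_n(x) = −(n + √n)x − 1/n for −1/n ≤ x ≤ 0. Then each b_n is continuous on ℝ, b_n(x) ≤ b(x) for all x, and b_{n+1}(x) − b_n(x) ≥ 1/(n(n+1)) for all x ∈ ℝ. -/
set_option maxHeartbeats 1000000 in
/-- for `b x = √x` (`x ≥ 0`), `b x = √(-x) + 1` (`x < 0`), and the
approximations `b_n` defined piecewise as in the paper, each `b_n` is continuous,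
`b_n ≤ b`, and `b_{n+1} - b_n ≥ 1/(n(n+1))`. -/
theorem stmt9 (n : ℕ) (hn : 1 ≤ n)
    (b : ℝ → ℝ)
    (hb : ∀ x : ℝ, b x = if 0 ≤ x then Real.sqrt x else Real.sqrt (-x) + 1)
    (bn : ℕ → ℝ → ℝ)
    (hbn : ∀ m : ℕ, ∀ x : ℝ, bn m x =
      if 0 < x then Real.sqrt x - 1 / m
      else if x < -(1 / m) then Real.sqrt (-x) + 1 - 1 / m
      else -((m : ℝ) + Real.sqrt m) * x - 1 / m) :
    Continuous (bn n) ∧ (∀ x : ℝ, bn n x ≤ b x) ∧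
      ∀ x : ℝ, 1 / ((n : ℝ) * (n + 1)) ≤ bn (n + 1) x - bn n x := by
  have hn' : (1 : ℝ) ≤ (n : ℝ) := by exact_mod_cast hn
  have hn0 : (0 : ℝ) < (n : ℝ) := by linarith
  have hinv : (0 : ℝ) < 1 / (n : ℝ) := by positivity
  have hsq : Real.sqrt (n : ℝ) * Real.sqrt n = n := Real.mul_self_sqrt (by positivity)
  have hsp : (0 : ℝ) < Real.sqrt n := Real.sqrt_pos.2 hn0
  -- key inequality: for 0 ≤ t ≤ 1/n, (n + √n) t ≤ √t + 1
  have key : ∀ t : ℝ, 0 ≤ t → t ≤ 1 / n → ((n : ℝ) + Real.sqrt n) * t ≤ Real.sqrt t + 1 := by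
    intro t ht ht'
    have h1 : (n : ℝ) * t ≤ 1 := by
      rw [div_eq_mul_inv, one_mul] at ht'
      calc (n : ℝ) * t ≤ (n : ℝ) * ((n : ℝ))⁻¹ := by
            apply mul_le_mul_of_nonneg_left ht' (le_of_lt hn0)
        _ = 1 := by field_simp
    have h2 : Real.sqrt n * t = Real.sqrt ((n : ℝ) * t ^ 2) := by
      rw [Real.sqrt_mul (by positivity), Real.sqrt_sq ht]
    have h3 : (n : ℝ) * t ^ 2 ≤ t := by nlinarith
    have h4 : Real.sqrt ((n : ℝ) * t ^ 2) ≤ Real.sqrt t := Real.sqrt_le_sqrt h3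
    linarith [h2 ▸ h4]
  -- rewrite bn n as a nested if with ≤ conditions
  have heq : bn n = fun x : ℝ => if x ≤ 0 then
      (if -(1 / (n : ℝ)) ≤ x then -((n : ℝ) + Real.sqrt n) * x - 1 / n
        else Real.sqrt (-x) + 1 - 1 / n)
      else Real.sqrt x - 1 / n := by
    funext x
    rw [hbn]
    by_cases h1 : 0 < x
    · rw [if_pos h1, if_neg (not_le.2 h1)]
    · rw [if_neg h1, if_pos (not_lt.1 h1)]
      by_cases h2 : x < -(1 / (n : ℝ))
      · rw [if_pos h2, if_neg (not_le.2 h2)]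
      · rw [if_neg h2, if_pos (not_lt.1 h2)]
  refine ⟨?_, ?_, ?_⟩
  · -- continuity
    rw [heq]
    have hmid : Continuous fun x : ℝ => -((n : ℝ) + Real.sqrt n) * x - 1 / n := by continuity
    have hleft : Continuous fun x : ℝ => Real.sqrt (-x) + 1 - 1 / n := by
      have : Continuous fun x : ℝ => Real.sqrt (-x) :=
        Real.continuous_sqrt.comp continuous_neg
      continuity
    have hright : Continuous fun x : ℝ => Real.sqrt x - 1 / n := by continuity
    have hinner : Continuous fun x : ℝ =>
        if -(1 / (n : ℝ)) ≤ x then -((n : ℝ) + Real.sqrt n) * x - 1 / n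
        else Real.sqrt (-x) + 1 - 1 / n := by
      apply Continuous.if_le hmid hleft continuous_const continuous_id
      intro x hx
      simp only [id] at hx
      rw [← hx]
      have h1 : Real.sqrt (-(-(1 / (n : ℝ)))) = 1 / Real.sqrt n := by
        rw [neg_neg, one_div, one_div, Real.sqrt_inv]
      rw [h1]
      field_simp
      nlinarith [hsq]
    apply Continuous.if_le hinner hright continuous_id continuous_const
    intro x hx
    simp only [id] at hx
    rw [hx]
    rw [if_pos (by linarith : -(1 / (n : ℝ)) ≤ 0)]
    simp
  · -- bn n ≤ b
    intro x
    rw [hbn, hb]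
    have hs0 : (0 : ℝ) ≤ Real.sqrt (-x) := Real.sqrt_nonneg _
    by_cases h1 : 0 < x
    · rw [if_pos h1, if_pos (le_of_lt h1)]
      linarith
    · rw [if_neg h1]
      push_neg at h1
      by_cases h2 : x < -(1 / (n : ℝ))
      · rw [if_pos h2, if_neg (by linarith : ¬ (0 : ℝ) ≤ x)]
        linarith
      · push_neg at h2
        rw [if_neg (not_lt.2 h2)]
        rcases eq_or_lt_of_le h1 with h3 | h3
        · have hx0 : x = 0 := h3
          subst hx0
          rw [if_pos le_rfl]
          simp
        · rw [if_neg (not_le.2 h3)]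
          have := key (-x) (by linarith) (by linarith)
          linarith
  · -- difference
    intro x
    have hA : 1 / ((n : ℝ) * (n + 1)) = 1 / n - 1 / (n + 1) := by
      field_simp
      ring
    have hns : Real.sqrt (n : ℝ) ≤ Real.sqrt ((n : ℝ) + 1) := Real.sqrt_le_sqrt (by linarith)
    have hfr : (1 : ℝ) / ((n : ℝ) + 1) < 1 / n := by
      apply one_div_lt_one_div_of_lt hn0
      linarith
    rw [hbn, hbn]
    push_cast
    by_cases h1 : 0 < x
    · rw [if_pos h1, if_pos h1]
      rw [hA]; linarith
    · rw [if_neg h1, if_neg h1]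
      push_neg at h1
      by_cases h2 : x < -(1 / (n : ℝ))
      · rw [if_pos h2, if_pos (by linarith : x < -(1 / ((n : ℝ) + 1)))]
        rw [hA]; linarith
      · push_neg at h2
        rw [if_neg (not_lt.2 h2)]
        by_cases h3 : x < -(1 / ((n : ℝ) + 1))
        · rw [if_pos h3]
          have := key (-x) (by linarith) (by linarith)
          rw [hA]
          linarith
        · push_neg at h3
          rw [if_neg (not_lt.2 h3)]
          have hx0 : -x ≥ 0 := by linarith
          have hco : (0 : ℝ) ≤ -x - Real.sqrt ((n : ℝ) + 1) * x + Real.sqrt (n : ℝ) * x := by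
            nlinarith [mul_nonneg (show (0:ℝ) ≤ 1 + Real.sqrt ((n : ℝ) + 1) - Real.sqrt n by
              linarith) hx0]
          rw [hA]
          linarith
end

section
/- Let ω_t = αt + t^{2+β} sin(1/t) for t ∈ (0,T], ω₀ = 0, with α, β > 0. If t₀ ∈ (0,T] satisfies ω'_{t₀} ≥ 0 and ω_{t₀} ≤ 0, then ω''_{t₀} > 0. -/
open Real

lemma aux_deriv1 (α β t : ℝ) (ht : 0 < t) :
    HasDerivAt (fun x : ℝ => α * x + x ^ ((2 : ℝ) + β) * Real.sin x⁻¹)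
      (α + (((2:ℝ)+β) * t ^ ((1:ℝ)+β) * Real.sin t⁻¹ - t ^ β * Real.cos t⁻¹)) t := by
  have hpow : HasDerivAt (fun x : ℝ => x ^ ((2:ℝ)+β))
      (((2:ℝ)+β) * t ^ ((2:ℝ)+β-1)) t :=
    Real.hasDerivAt_rpow_const (Or.inl ht.ne')
  have hsin : HasDerivAt (fun x : ℝ => Real.sin x⁻¹)
      (Real.cos t⁻¹ * (-(t^2)⁻¹)) t :=
    (Real.hasDerivAt_sin t⁻¹).comp t (hasDerivAt_inv ht.ne')
  have hmul := hpow.mul hsin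
  have hlin : HasDerivAt (fun x : ℝ => α * x) α t := by
    simpa using (hasDerivAt_id t).const_mul α
  have h := hlin.add hmul
  refine h.congr_deriv ?_
  have e1 : (2:ℝ)+β-1 = 1+β := by ring
  have e2 : t ^ ((2:ℝ)+β) * (t^2)⁻¹ = t ^ β := by
    rw [show ((2:ℝ)+β) = β + 2 by ring, Real.rpow_add ht, show ((2:ℝ)) = ((2:ℕ):ℝ) by norm_num,
      Real.rpow_natCast]
    field_simp
  have e3 : t ^ ((2:ℝ)+β) * (Real.cos t⁻¹ * -(t^2)⁻¹) = -(t ^ β * Real.cos t⁻¹) := by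
    rw [← e2]; ring
  rw [e1, e3]; ring

lemma aux_deriv2 (α β t : ℝ) (ht : 0 < t) :
    HasDerivAt (fun x : ℝ => α + (((2:ℝ)+β) * x ^ ((1:ℝ)+β) * Real.sin x⁻¹ - x ^ β * Real.cos x⁻¹))
      (((2:ℝ)+β) * ((1+β) * t ^ β * Real.sin t⁻¹ - t ^ β * t⁻¹ * Real.cos t⁻¹)
        - (β * (t ^ β * t⁻¹) * Real.cos t⁻¹ + t ^ β * t⁻¹ * t⁻¹ * Real.sin t⁻¹)) t := by
  have hpow1 : HasDerivAt (fun x : ℝ => x ^ ((1:ℝ)+β)) (((1:ℝ)+β) * t ^ ((1:ℝ)+β-1)) t :=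
    Real.hasDerivAt_rpow_const (Or.inl ht.ne')
  have hpowβ : HasDerivAt (fun x : ℝ => x ^ β) (β * t ^ (β-1)) t :=
    Real.hasDerivAt_rpow_const (Or.inl ht.ne')
  have hsin : HasDerivAt (fun x : ℝ => Real.sin x⁻¹) (Real.cos t⁻¹ * (-(t^2)⁻¹)) t :=
    (Real.hasDerivAt_sin t⁻¹).comp t (hasDerivAt_inv ht.ne')
  have hcos : HasDerivAt (fun x : ℝ => Real.cos x⁻¹) (-Real.sin t⁻¹ * (-(t^2)⁻¹)) t :=
    (Real.hasDerivAt_cos t⁻¹).comp t (hasDerivAt_inv ht.ne')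
  have term1 := ((hpow1.mul hsin).const_mul ((2:ℝ)+β))
  have term2 := hpowβ.mul hcos
  have h := ((term1.sub term2).const_add α)
  have ea : (1:ℝ)+β-1 = β := by ring
  have eb : t ^ ((1:ℝ)+β) = t * t ^ β := by rw [Real.rpow_add ht, Real.rpow_one]
  have ec : t ^ (β-1) = t ^ β * t⁻¹ := by rw [Real.rpow_sub ht, Real.rpow_one, div_eq_mul_inv]
  refine (h.congr_deriv ?_).congr_of_eventuallyEq (Filter.Eventually.of_forall fun x => ?_)
  · rw [ea, eb, ec]; field_simp; ring
  · simp only [Pi.mul_apply, Pi.sub_apply]; ring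

/-- key computation of Example 4.3: for
`ω t = α t + t^{2+β} sin(1/t)` (`t > 0`) with `α, β > 0`, if `t₀ ∈ (0,T]` satisfies
`ω' t₀ ≥ 0` and `ω t₀ ≤ 0`, then `ω'' t₀ > 0`. -/
theorem stmt16 (α β T t₀ : ℝ) (hα : 0 < α) (hβ : 0 < β)
    (ht₀ : t₀ ∈ Set.Ioc (0 : ℝ) T)
    (ω : ℝ → ℝ)
    (hω : ∀ t : ℝ, 0 < t → ω t = α * t + t ^ ((2 : ℝ) + β) * Real.sin t⁻¹)
    (h1 : 0 ≤ deriv ω t₀) (h2 : ω t₀ ≤ 0) :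
    0 < deriv (deriv ω) t₀ := by
  obtain ⟨ht0, -⟩ := ht₀
  have hωg : ∀ t : ℝ, 0 < t → deriv ω t
      = α + (((2:ℝ)+β) * t ^ ((1:ℝ)+β) * Real.sin t⁻¹ - t ^ β * Real.cos t⁻¹) := by
    intro t ht
    have hev : ω =ᶠ[nhds t] fun x => α * x + x ^ ((2:ℝ)+β) * Real.sin x⁻¹ :=
      Filter.eventually_of_mem (isOpen_Ioi.mem_nhds ht) (fun x hx => hω x hx)
    rw [hev.deriv_eq, (aux_deriv1 α β t ht).deriv]
  have hd2 : deriv (deriv ω) t₀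
      = ((2:ℝ)+β) * ((1+β) * t₀ ^ β * Real.sin t₀⁻¹ - t₀ ^ β * t₀⁻¹ * Real.cos t₀⁻¹)
        - (β * (t₀ ^ β * t₀⁻¹) * Real.cos t₀⁻¹ + t₀ ^ β * t₀⁻¹ * t₀⁻¹ * Real.sin t₀⁻¹) := by
    have hev : deriv ω =ᶠ[nhds t₀] fun x =>
        α + (((2:ℝ)+β) * x ^ ((1:ℝ)+β) * Real.sin x⁻¹ - x ^ β * Real.cos x⁻¹) :=
      Filter.eventually_of_mem (isOpen_Ioi.mem_nhds ht0) (fun x hx => hωg x hx)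
    rw [hev.deriv_eq, (aux_deriv2 α β t₀ ht0).deriv]
  rw [hd2]
  rw [hωg t₀ ht0] at h1
  rw [hω t₀ ht0] at h2
  set s := Real.sin t₀⁻¹ with hsdef
  set c := Real.cos t₀⁻¹ with hcdef
  have hP : 0 < t₀ ^ β := Real.rpow_pos_of_pos ht0 β
  set P := t₀ ^ β with hPdef
  have e1 : t₀ ^ ((1:ℝ)+β) = t₀ * P := by rw [Real.rpow_add ht0, Real.rpow_one]
  have e2 : t₀ ^ ((2:ℝ)+β) = t₀ * (t₀ * P) := by
    rw [show (2:ℝ)+β = 1+(1+β) by ring, Real.rpow_add ht0, Real.rpow_one, e1]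
  rw [e1] at h1
  rw [e2] at h2
  -- basic consequences
  have hs1 : α + t₀ * (P * s) ≤ 0 := by nlinarith [ht0, h2]
  have hPs : P * s < 0 := by nlinarith [ht0, hs1, hα]
  have hc : P * c ≤ α + (2+β) * (t₀ * (P * s)) := by nlinarith [h1]
  have goalEq : ((2:ℝ)+β) * ((1+β) * P * s - P * t₀⁻¹ * c)
      - (β * (P * t₀⁻¹) * c + P * t₀⁻¹ * t₀⁻¹ * s)
      = ((2+β)*(1+β)*(t₀*(t₀*(P*s))) - (2+2*β)*(t₀*(P*c)) - P*s) / t₀^2 := by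
    field_simp
    ring
  rw [goalEq]
  apply div_pos _ (by positivity)
  have A1 : (2+2*β)*(t₀*(P*c)) ≤ (2+2*β)*(t₀*(α + (2+β)*(t₀*(P*s)))) := by
    have := mul_le_mul_of_nonneg_left hc ht0.le
    nlinarith [this, hβ]
  have A3 : (2+β)*(1+β)*(t₀*(α + t₀*(P*s))) ≤ 0 := by
    have h0 : t₀*(α + t₀*(P*s)) ≤ 0 := mul_nonpos_of_nonneg_of_nonpos ht0.le hs1
    have hf : (0:ℝ) ≤ (2+β)*(1+β) := by positivity
    exact mul_nonpos_of_nonneg_of_nonpos hf h0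
  nlinarith [A1, A3, hPs, mul_pos (mul_pos hβ hα) ht0,
    mul_pos (mul_pos (mul_pos hβ hβ) hα) ht0]
end

section
/- Let W be a standard Brownian motion and b satisfy: b(0)=0; b non-decreasing on (0,∞); b continuous on [0,∞) and C¹ on (0,∞) with b' non-increasing; E[∫₀ᵀ b'(|W_s|+) ds] < ∞; and b ≥ 0 on some interval (−ε, 0). Then for almost every sample path of W, the equation X_t = ∫₀ᵗ b(X_s) ds + |W_t| has exactly one continuous solution on [0,T]. -/
/-!
Every solution stays above `|W|`: as long as it is above `-ε` the drift is non-negative, so it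
never reaches `-ε`. Existence: the drift `b (max · 0)` is continuous, non-decreasing and of linear
growth (`b` is concave on `(0, ∞)`), so the Picard iterates started at `|W|` increase, are
bounded by an exponential supersolution, and converge to a solution. Uniqueness: concavity
makes `b` Lipschitz on `[c, ∞)` with constant `b' c`, so two solutions `x, y ≥ |W|` satisfy
`|x - y| t ≤ ∫₀ᵗ b' |W s| * |x - y| s ds`. Along almost every path `W` vanishes only on a
Lebesgue-null set of times (its marginals have no atoms) and, since `E ∫₀ᵀ b' |W s| ds < ∞`,
`s ↦ b' |W s|` is integrable; a Gronwall argument with this integrable kernel gives `x = y`.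
-/

open MeasureTheory ProbabilityTheory intervalIntegral

/-- A standard one-dimensional Brownian motion: continuous paths started at `0`, Gaussian
increments `W t - W s ∼ N(0, t-s)`, and independent increments. -/
def IsBrownianMotion {Ω : Type*} [MeasurableSpace Ω] (P : Measure Ω)
    (W : ℝ → Ω → ℝ) : Prop :=
  (∀ ω, W 0 ω = 0) ∧
  (∀ ω, Continuous fun t => W t ω) ∧
  (∀ t : ℝ, Measurable (W t)) ∧
  (∀ s t : ℝ, 0 ≤ s → s ≤ t →
    Measure.map (fun ω => W t ω - W s ω) P = gaussianReal 0 (Real.toNNReal (t - s))) ∧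
  (∀ (n : ℕ) (t : Fin (n + 1) → ℝ), Monotone t → 0 ≤ t 0 →
    iIndepFun
      (fun (i : Fin n) ω => W (t i.succ) ω - W (t i.castSucc) ω) P)

open Set Filter Topology

theorem MonotoneOn.Ici_of_Ioi {f : ℝ → ℝ} {a : ℝ} (hmono : MonotoneOn f (Ioi a))
    (hcont : ContinuousOn f (Ici a)) : MonotoneOn f (Ici a) := by
  rw [← Ioi_insert]
  refine hmono.insert_of_continuousWithinAt ?_ ?_
  · rw [← mem_closure_iff_clusterPt, closure_Ioi]
    exact self_mem_Ici
  · exact (hcont a self_mem_Ici).mono Ioi_subset_Ici_self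

theorem HasDerivAt.nonneg_of_monotoneOn_isOpen {f : ℝ → ℝ} {f' x : ℝ} {s : Set ℝ}
    (hf : HasDerivAt f f' x) (hmono : MonotoneOn f s) (hs : IsOpen s) (hx : x ∈ s) :
    0 ≤ f' := by
  have := hmono.derivWithin_nonneg (x := x)
  rwa [derivWithin_of_isOpen hs hx, hf.deriv] at this

theorem abs_sub_le_deriv_mul_of_antitoneOn {f f' : ℝ → ℝ} {c u v : ℝ}
    (hf : ∀ x ∈ Ici c, HasDerivAt f (f' x) x) (hf'0 : ∀ x ∈ Ici c, 0 ≤ f' x)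
    (hf' : AntitoneOn f' (Ici c)) (hu : c ≤ u) (hv : c ≤ v) :
    |f v - f u| ≤ f' c * |v - u| := by
  refine (convex_Ici c).norm_image_sub_le_of_norm_hasDerivWithin_le
    (fun x hx => (hf x hx).hasDerivWithinAt) (fun x hx => ?_) hu hv
  rw [Real.norm_of_nonneg (hf'0 x hx)]
  exact hf' self_mem_Ici hx hx

theorem le_add_mul_of_antitoneOn_deriv {b b' : ℝ → ℝ} (hmono : MonotoneOn b (Ici 0))
    (hderiv : ∀ x ∈ Ioi 0, HasDerivAt b (b' x) x) (hb'0 : ∀ x ∈ Ioi 0, 0 ≤ b' x)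
    (hanti : AntitoneOn b' (Ioi 0)) {y : ℝ} (hy : 0 ≤ y) : b y ≤ b 1 + b' 1 * y := by
  have hb'1 : 0 ≤ b' 1 := hb'0 1 (by norm_num)
  rcases le_total y 1 with hy1 | hy1
  · nlinarith [hmono hy (mem_Ici.2 zero_le_one) hy1]
  · have hsub : Ici (1 : ℝ) ⊆ Ioi 0 := Ici_subset_Ioi.2 one_pos
    have hlip := abs_sub_le_deriv_mul_of_antitoneOn (fun x hx => hderiv x (hsub hx))
      (fun x hx => hb'0 x (hsub hx)) (hanti.mono hsub) le_rfl hy1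
    rw [abs_of_nonneg (sub_nonneg.2 hy1)] at hlip
    nlinarith [le_abs_self (b y - b 1)]

theorem le_of_integral_equation {f g x : ℝ → ℝ} {a T : ℝ} (ha : a < 0)
    (hf : ∀ y, a < y → 0 ≤ f y) (hg : ∀ t, 0 ≤ g t) (hx : ContinuousOn x (Icc 0 T))
    (heq : ∀ t ∈ Icc 0 T, x t = (∫ s in (0 : ℝ)..t, f (x s)) + g t) :
    ∀ t ∈ Icc 0 T, g t ≤ x t := by
  have hstep (t : ℝ) (ht : t ∈ Icc 0 T) (hxt : ∀ s ∈ Ico 0 t, a < x s) : g t ≤ x t := by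
    have hint : 0 ≤ ∫ s in (0 : ℝ)..t, f (x s) := by
      refine integral_nonneg_of_ae_restrict ht.1 ?_
      rw [← Measure.restrict_congr_set Ico_ae_eq_Icc]
      exact ae_restrict_of_forall_mem measurableSet_Ico fun s hs => hf _ (hxt s hs)
    rw [heq t ht]
    linarith
  -- at the first time `τ` with `x τ ≤ a`, `hstep` gives `x τ ≥ g τ ≥ 0`
  have habove (t : ℝ) (ht : t ∈ Icc 0 T) : a < x t := by
    by_contra! hxt
    set S := Icc 0 T ∩ x ⁻¹' Iic a
    have hS : IsClosed S := hx.preimage_isClosed_of_isClosed isClosed_Icc isClosed_Iic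
    have hSbdd : BddBelow S := ⟨0, fun s hs => hs.1.1⟩
    have hτ : sInf S ∈ S := hS.csInf_mem ⟨t, ht, hxt⟩ hSbdd
    have := hstep _ hτ.1 fun s hs => lt_of_not_ge fun hxs =>
      (csInf_le hSbdd ⟨⟨hs.1, hs.2.le.trans hτ.1.2⟩, hxs⟩).not_gt hs.2
    linarith [hg (sInf S), show x (sInf S) ≤ a from hτ.2]
  exact fun t ht => hstep t ht fun s hs => habove s ⟨hs.1, hs.2.le.trans ht.2⟩

noncomputable def picardIter (f g : ℝ → ℝ) : ℕ → ℝ → ℝ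
  | 0 => g
  | n + 1 => fun t => (∫ s in (0 : ℝ)..t, f (picardIter f g n s)) + g t

section Picard
variable {f g : ℝ → ℝ}

theorem continuous_picardIter (hf : Continuous f) (hg : Continuous g) (n : ℕ) :
    Continuous (picardIter f g n) := by
  induction n with
  | zero => exact hg
  | succ n ih =>
    exact (continuous_primitive (fun _ _ => (hf.comp ih).intervalIntegrable _ _) 0).add hg

theorem picardIter_le_succ (hf : Continuous f) (hfm : Monotone f) (hf0 : ∀ y, 0 ≤ f y)
    (hg : Continuous g) (n : ℕ) {t : ℝ} (ht : 0 ≤ t) :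
    picardIter f g n t ≤ picardIter f g (n + 1) t := by
  induction n generalizing t with
  | zero =>
    simpa [picardIter] using integral_nonneg ht fun s _ => hf0 (g s)
  | succ n ih =>
    have hcont (m : ℕ) : IntervalIntegrable (fun s => f (picardIter f g m s)) volume 0 t :=
      (hf.comp (continuous_picardIter hf hg m)).intervalIntegrable 0 t
    simp only [picardIter]
    gcongr ?_ + _
    exact integral_mono_on ht (hcont n) (hcont (n + 1)) fun s hs => hfm (ih hs.1)

theorem picardIter_le_of_supersolution (hf : Continuous f) (hfm : Monotone f)
    (hg : Continuous g) {u : ℝ → ℝ} (hu : Continuous u) {T : ℝ}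
    (hsuper : ∀ t ∈ Icc 0 T, (∫ s in (0 : ℝ)..t, f (u s)) + g t ≤ u t)
    (hgu : ∀ t ∈ Icc 0 T, g t ≤ u t) (n : ℕ) :
    ∀ t ∈ Icc 0 T, picardIter f g n t ≤ u t := by
  induction n with
  | zero => exact hgu
  | succ n ih =>
    intro t ht
    refine le_trans ?_ (hsuper t ht)
    simp only [picardIter]
    gcongr ?_ + _
    exact integral_mono_on ht.1 ((hf.comp (continuous_picardIter hf hg n)).intervalIntegrable _ _)
      ((hf.comp hu).intervalIntegrable _ _)
      fun s hs => hfm (ih s ⟨hs.1, hs.2.trans ht.2⟩)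

theorem exists_solution_of_supersolution (hf : Continuous f) (hfm : Monotone f)
    (hf0 : ∀ y, 0 ≤ f y) (hg : Continuous g) {u : ℝ → ℝ} (hu : Continuous u) {T : ℝ}
    (hsuper : ∀ t ∈ Icc 0 T, (∫ s in (0 : ℝ)..t, f (u s)) + g t ≤ u t) :
    ∃ x : ℝ → ℝ, ContinuousOn x (Icc 0 T) ∧ (∀ t ∈ Icc 0 T, g t ≤ x t) ∧
      ∀ t ∈ Icc 0 T, x t = (∫ s in (0 : ℝ)..t, f (x s)) + g t := by
  set X := picardIter f g
  have hXcont := continuous_picardIter hf hg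
  have hXu : ∀ n, ∀ t ∈ Icc 0 T, X n t ≤ u t :=
    picardIter_le_of_supersolution hf hfm hg hu hsuper fun t ht =>
      (le_add_of_nonneg_left (integral_nonneg ht.1 fun s _ => hf0 _)).trans (hsuper t ht)
  have hbdd (t : ℝ) (ht : t ∈ Icc 0 T) : BddAbove (range fun n => X n t) :=
    ⟨u t, forall_mem_range.2 fun n => hXu n t ht⟩
  set x : ℝ → ℝ := fun t => ⨆ n, X n t
  have hlim (t : ℝ) (ht : t ∈ Icc 0 T) : Tendsto (fun n => X n t) atTop (𝓝 (x t)) :=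
    tendsto_atTop_ciSup (monotone_nat_of_le_succ fun n => picardIter_le_succ hf hfm hf0 hg n ht.1)
      (hbdd t ht)
  have hxu (t : ℝ) (ht : t ∈ Icc 0 T) : x t ≤ u t := ciSup_le fun n => hXu n t ht
  have hfx_meas : Measurable fun s => f (x s) :=
    hf.measurable.comp (Measurable.iSup fun n => (hXcont n).measurable)
  have hfu (t : ℝ) : IntervalIntegrable (fun s => f (u s)) volume 0 t :=
    (hf.comp hu).intervalIntegrable 0 t
  have hdom {t : ℝ} (ht : t ∈ Icc 0 T) {y : ℝ → ℝ} (hy : ∀ s ∈ Icc 0 T, y s ≤ u s) :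
      ∀ s ∈ uIoc 0 t, ‖f (y s)‖ ≤ f (u s) := by
    intro s hs
    rw [uIoc_of_le ht.1] at hs
    rw [Real.norm_of_nonneg (hf0 _)]
    exact hfm (hy s ⟨hs.1.le, hs.2.trans ht.2⟩)
  have heq (t : ℝ) (ht : t ∈ Icc 0 T) : x t = (∫ s in (0 : ℝ)..t, f (x s)) + g t := by
    refine tendsto_nhds_unique ((hlim t ht).comp (tendsto_add_atTop_nat 1)) ?_
    refine Tendsto.add_const _ (tendsto_integral_filter_of_dominated_convergence _
      (Eventually.of_forall fun n => (hf.comp (hXcont n)).aestronglyMeasurable)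
      (Eventually.of_forall fun n => Eventually.of_forall (hdom ht (hXu n))) (hfu t) ?_)
    refine Eventually.of_forall fun s hs => (hf.tendsto _).comp (hlim s ?_)
    rw [uIoc_of_le ht.1] at hs
    exact ⟨hs.1.le, hs.2.trans ht.2⟩
  refine ⟨x, ?_, fun t ht => ?_, heq⟩
  · rcases lt_or_ge T 0 with hT | hT
    · simp [Icc_eq_empty_of_lt hT]
    have hint : IntervalIntegrable (fun s => f (x s)) volume 0 T :=
      (hfu T).mono_fun' hfx_meas.aestronglyMeasurable
        (ae_restrict_of_forall_mem measurableSet_uIoc (hdom ⟨hT, le_rfl⟩ hxu))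
    refine ((continuousOn_primitive_interval' hint left_mem_uIcc).mono Icc_subset_uIcc).add
      hg.continuousOn |>.congr heq
  · exact le_ciSup (hbdd t ht) 0

end Picard

theorem integral_add_mul_exp (A B C t : ℝ) :
    ∫ s in (0 : ℝ)..t, (A + B * (C * Real.exp (B * s))) =
      A * t + C * (Real.exp (B * t) - 1) := by
  have hderiv (s : ℝ) : HasDerivAt (fun r => A * r + C * Real.exp (B * r))
      (A + B * (C * Real.exp (B * s))) s := by
    have h := ((hasDerivAt_id s).const_mul A).add
      (((hasDerivAt_id s).const_mul B).exp.const_mul C)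
    simp only [id, mul_one] at h
    exact h.congr_deriv (by ring)
  rw [integral_eq_sub_of_hasDerivAt (fun s _ => hderiv s)
    (Continuous.intervalIntegrable (by fun_prop) _ _)]
  simp only [mul_zero, Real.exp_zero, zero_add]
  ring

theorem exists_supersolution {f g : ℝ → ℝ} {A B T : ℝ} (hf : Continuous f)
    (hfA : ∀ y, 0 ≤ y → f y ≤ A + B * y) (hA : 0 ≤ A) (hg : Continuous g) :
    ∃ u : ℝ → ℝ, Continuous u ∧
      ∀ t ∈ Icc 0 T, (∫ s in (0 : ℝ)..t, f (u s)) + g t ≤ u t := by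
  obtain ⟨G, hG⟩ := isCompact_Icc.bddAbove_image (hg.continuousOn (s := Icc 0 T))
  set C := A * T + max G 0
  refine ⟨fun t => C * Real.exp (B * t), by fun_prop, fun t ht => ?_⟩
  have hC : 0 ≤ C := by nlinarith [le_max_right G 0, ht.1.trans ht.2]
  have hdrift : ∫ s in (0 : ℝ)..t, f (C * Real.exp (B * s)) ≤
      ∫ s in (0 : ℝ)..t, (A + B * (C * Real.exp (B * s))) :=
    integral_mono_on ht.1 (Continuous.intervalIntegrable (by fun_prop) _ _)
      (Continuous.intervalIntegrable (by fun_prop) _ _) fun s _ => hfA _ (by positivity)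
  have hgt : g t ≤ max G 0 := (hG (mem_image_of_mem g ht)).trans (le_max_left G 0)
  rw [integral_add_mul_exp] at hdrift
  nlinarith [ht.2]

theorem exists_solution_of_linear_growth {b g : ℝ → ℝ} {A B T : ℝ} (hb0 : b 0 = 0)
    (hmono : MonotoneOn b (Ici 0)) (hcont : ContinuousOn b (Ici 0))
    (hgrowth : ∀ y, 0 ≤ y → b y ≤ A + B * y) (hg : Continuous g) (hg0 : ∀ t, 0 ≤ g t) :
    ∃ x : ℝ → ℝ, ContinuousOn x (Icc 0 T) ∧
      ∀ t ∈ Icc 0 T, x t = (∫ s in (0 : ℝ)..t, b (x s)) + g t := by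
  set f : ℝ → ℝ := fun y => b (max y 0)
  have hf : Continuous f :=
    hcont.comp_continuous (continuous_id.max continuous_const) fun y => le_max_right y 0
  have hfm : Monotone f := fun y z hyz =>
    hmono (le_max_right y 0) (le_max_right z 0) (max_le_max hyz le_rfl)
  have hf0 (y : ℝ) : 0 ≤ f y := hb0 ▸ hmono self_mem_Ici (le_max_right y 0) (le_max_right y 0)
  obtain ⟨u, hu, hsuper⟩ := exists_supersolution (T := T) hf
    (fun y hy => by simpa only [f, max_eq_left hy] using hgrowth y hy)
    (by simpa [hb0] using hgrowth 0 le_rfl) hg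
  obtain ⟨x, hx, hgx, heq⟩ := exists_solution_of_supersolution hf hfm hf0 hg hu hsuper
  refine ⟨x, hx, fun t ht => (heq t ht).trans ?_⟩
  congr 1
  refine integral_congr fun s hs => ?_
  rw [uIcc_of_le ht.1] at hs
  simp only [f, max_eq_left ((hg0 s).trans (hgx s ⟨hs.1, hs.2.trans ht.2⟩))]

theorem MeasureTheory.IntegrableOn.intervalIntegrable_of_mem_Icc_s19 {E : Type*}
    [NormedAddCommGroup E] {f : ℝ → E} {a b c d : ℝ} (hf : IntegrableOn f (Icc a b))
    (hc : c ∈ Icc a b) (hd : d ∈ Icc a b) : IntervalIntegrable f volume c d :=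
  (hf.mono_set (uIcc_subset_Icc hc hd)).intervalIntegrable

theorem integral_mul_eq_zero_of_forall_Ico {k D : ℝ → ℝ} {τ : ℝ} (hτ : 0 ≤ τ)
    (h : ∀ s ∈ Ico 0 τ, D s = 0) : ∫ s in (0 : ℝ)..τ, k s * D s = 0 := by
  refine integral_zero_ae ?_
  filter_upwards [Measure.ae_ne volume τ] with s hsτ hs
  rw [uIoc_of_le hτ, mem_Ioc] at hs
  rw [h s ⟨hs.1.le, lt_of_le_of_ne hs.2 hsτ⟩, mul_zero]

section Gronwall
variable {D k : ℝ → ℝ} {T : ℝ}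

theorem exists_gt_eqOn_zero_of_le_integral_mul (hk : IntegrableOn k (Icc 0 T))
    (hk0 : ∀ᵐ s ∂volume.restrict (Icc 0 T), 0 ≤ k s) (hD : ContinuousOn D (Icc 0 T))
    (hD0 : ∀ t ∈ Icc 0 T, 0 ≤ D t)
    (hle : ∀ t ∈ Icc 0 T, D t ≤ ∫ s in (0 : ℝ)..t, k s * D s)
    {τ : ℝ} (hτ : τ ∈ Ico 0 T) (h : ∀ s ∈ Ico 0 τ, D s = 0) :
    ∃ t' ∈ Ioc τ T, ∀ s ∈ Icc τ t', D s = 0 := by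
  have hτ' : τ ∈ Icc 0 T := Ico_subset_Icc_self hτ
  have h0 : (0 : ℝ) ∈ Icc 0 T := ⟨le_rfl, hτ'.1.trans hτ'.2⟩
  have hT : T ∈ Icc 0 T := ⟨h0.2, le_rfl⟩
  have hkD : IntegrableOn (fun s => k s * D s) (Icc 0 T) := hk.mul_continuousOn hD isCompact_Icc
  have hmass : Tendsto (fun t => ∫ s in τ..t, k s) (𝓝[Ioc τ T] τ) (𝓝 0) := by
    have := ((continuousOn_primitive_interval' (hk.intervalIntegrable_of_mem_Icc_s19 hτ' hT)
      left_mem_uIcc) τ left_mem_uIcc).tendsto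
    rw [integral_same] at this
    exact this.mono_left (nhdsWithin_mono _ (Ioc_subset_Icc_self.trans Icc_subset_uIcc))
  have := left_nhdsWithin_Ioc_neBot hτ.2
  obtain ⟨t', hsmall, ht'⟩ :=
    ((hmass.eventually (gt_mem_nhds one_half_pos)).and self_mem_nhdsWithin).exists
  have ht'T : Icc τ t' ⊆ Icc 0 T := Icc_subset_Icc hτ.1 ht'.2
  obtain ⟨s₀, hs₀, hmax⟩ :=
    isCompact_Icc.exists_isMaxOn (nonempty_Icc.2 ht'.1.le) (hD.mono ht'T)
  have hM : 0 ≤ D s₀ := hD0 _ (ht'T hs₀)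
  -- `D` vanishes before `τ` and `[τ, t']` carries `k`-mass at most `1/2`
  have hhalf (t : ℝ) (ht : t ∈ Icc τ t') : D t ≤ D s₀ / 2 := by
    have htT := ht'T ht
    have hsub : Icc τ t ⊆ Icc 0 T := (Icc_subset_Icc_right ht.2).trans ht'T
    calc D t ≤ ∫ s in (0 : ℝ)..t, k s * D s := hle t htT
      _ = ∫ s in τ..t, k s * D s := by
        rw [← integral_add_adjacent_intervals (hkD.intervalIntegrable_of_mem_Icc_s19 h0 hτ')
          (hkD.intervalIntegrable_of_mem_Icc_s19 hτ' htT), integral_mul_eq_zero_of_forall_Ico hτ.1 h,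
          zero_add]
      _ ≤ ∫ s in τ..t, k s * D s₀ := by
        refine integral_mono_ae_restrict ht.1 (hkD.intervalIntegrable_of_mem_Icc_s19 hτ' htT)
          (IntegrableOn.intervalIntegrable_of_mem_Icc_s19 (hk.mul_const (D s₀)) hτ' htT) ?_
        filter_upwards [ae_restrict_of_ae_restrict_of_subset hsub hk0,
          ae_restrict_mem measurableSet_Icc] with s hks hs
        exact mul_le_mul_of_nonneg_left (hmax ⟨hs.1, hs.2.trans ht.2⟩) hks
      _ = (∫ s in τ..t, k s) * D s₀ := integral_mul_const _ _
      _ ≤ (∫ s in τ..t', k s) * D s₀ := by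
        gcongr
        exact integral_mono_interval le_rfl ht.1 ht.2
          (ae_restrict_of_ae_restrict_of_subset (Ioc_subset_Icc_self.trans ht'T) hk0)
          (hk.intervalIntegrable_of_mem_Icc_s19 hτ' (ht'T ⟨ht'.1.le, le_rfl⟩))
      _ ≤ 1 / 2 * D s₀ := by gcongr
      _ = D s₀ / 2 := by ring
  have hM0 : D s₀ ≤ 0 := by linarith [hhalf s₀ hs₀]
  exact ⟨t', ht', fun s hs => le_antisymm ((hhalf s hs).trans (by linarith)) (hD0 s (ht'T hs))⟩

theorem eqOn_zero_of_le_integral_mul_s19 (hk : IntegrableOn k (Icc 0 T))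
    (hk0 : ∀ᵐ s ∂volume.restrict (Icc 0 T), 0 ≤ k s) (hD : ContinuousOn D (Icc 0 T))
    (hD0 : ∀ t ∈ Icc 0 T, 0 ≤ D t)
    (hle : ∀ t ∈ Icc 0 T, D t ≤ ∫ s in (0 : ℝ)..t, k s * D s) :
    ∀ t ∈ Icc 0 T, D t = 0 := by
  intro t ht
  set Z := {t ∈ Icc 0 T | ∀ s ∈ Ico 0 t, D s = 0}
  have hZ0 : 0 ∈ Z := ⟨⟨le_rfl, ht.1.trans ht.2⟩, fun s hs => absurd hs.1 (not_le.2 hs.2)⟩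
  have hZbdd : BddAbove Z := ⟨T, fun s hs => hs.1.2⟩
  set τ := sSup Z
  have hτ : τ ∈ Icc 0 T := ⟨le_csSup hZbdd hZ0, csSup_le ⟨0, hZ0⟩ fun s hs => hs.1.2⟩
  have hbelow : ∀ s ∈ Ico 0 τ, D s = 0 := fun s hs => by
    obtain ⟨r, hr, hsr⟩ := exists_lt_of_lt_csSup ⟨0, hZ0⟩ hs.2
    exact hr.2 s ⟨hs.1, hsr⟩
  have hτT : τ = T := by
    by_contra hne
    obtain ⟨t', ht', hzero⟩ := exists_gt_eqOn_zero_of_le_integral_mul hk hk0 hD hD0 hle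
      ⟨hτ.1, lt_of_le_of_ne hτ.2 hne⟩ hbelow
    have : t' ∈ Z := ⟨⟨hτ.1.trans ht'.1.le, ht'.2⟩, fun s hs =>
      (lt_or_ge s τ).elim (fun h => hbelow s ⟨hs.1, h⟩) fun h => hzero s ⟨h, hs.2.le⟩⟩
    exact (le_csSup hZbdd this).not_gt ht'.1
  rw [hτT] at hbelow
  rcases ht.2.lt_or_eq with htT | rfl
  · exact hbelow t ⟨ht.1, htT⟩
  · exact le_antisymm ((hle t ht).trans_eq (integral_mul_eq_zero_of_forall_Ico ht.1 hbelow))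
      (hD0 t ht)

end Gronwall

theorem eqOn_of_integral_equation {f k g x y : ℝ → ℝ} {T : ℝ}
    (hk : IntegrableOn k (Icc 0 T))
    (hk0 : ∀ᵐ s ∂volume.restrict (Icc 0 T), 0 ≤ k s) (hx : ContinuousOn x (Icc 0 T))
    (hy : ContinuousOn y (Icc 0 T)) (hfx : ContinuousOn (fun s => f (x s)) (Icc 0 T))
    (hfy : ContinuousOn (fun s => f (y s)) (Icc 0 T))
    (hlip : ∀ᵐ s ∂volume.restrict (Icc 0 T), |f (x s) - f (y s)| ≤ k s * |x s - y s|)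
    (heqx : ∀ t ∈ Icc 0 T, x t = (∫ s in (0 : ℝ)..t, f (x s)) + g t)
    (heqy : ∀ t ∈ Icc 0 T, y t = (∫ s in (0 : ℝ)..t, f (y s)) + g t) :
    ∀ t ∈ Icc 0 T, x t = y t := by
  have hint {h : ℝ → ℝ} (hh : IntegrableOn h (Icc 0 T)) {t : ℝ} (ht : t ∈ Icc 0 T) :
      IntervalIntegrable h volume 0 t :=
    hh.intervalIntegrable_of_mem_Icc_s19 ⟨le_rfl, ht.1.trans ht.2⟩ ht
  have hD : ContinuousOn (fun s => |x s - y s|) (Icc 0 T) := (hx.sub hy).abs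
  have hfxi : IntegrableOn (fun s => f (x s)) (Icc 0 T) := hfx.integrableOn_compact isCompact_Icc
  have hfyi : IntegrableOn (fun s => f (y s)) (Icc 0 T) := hfy.integrableOn_compact isCompact_Icc
  have hgronwall (t : ℝ) (ht : t ∈ Icc 0 T) :
      |x t - y t| ≤ ∫ s in (0 : ℝ)..t, k s * |x s - y s| := by
    calc |x t - y t| = |∫ s in (0 : ℝ)..t, (f (x s) - f (y s))| := by
          rw [integral_sub (hint hfxi ht) (hint hfyi ht), heqx t ht, heqy t ht,
            add_sub_add_right_eq_sub]
      _ ≤ ∫ s in (0 : ℝ)..t, |f (x s) - f (y s)| := abs_integral_le_integral_abs ht.1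
      _ ≤ ∫ s in (0 : ℝ)..t, k s * |x s - y s| :=
          integral_mono_ae_restrict ht.1 (hint (hfxi.sub hfyi) ht).abs
            (hint (hk.mul_continuousOn hD isCompact_Icc) ht)
            (ae_restrict_of_ae_restrict_of_subset (Icc_subset_Icc_right ht.2) hlip)
  intro t ht
  exact sub_eq_zero.1 (abs_eq_zero.1 (eqOn_zero_of_le_integral_mul_s19 hk hk0 hD
    (fun _ _ => abs_nonneg _) hgronwall t ht))

theorem eqOn_of_integral_equation_of_antitoneOn_deriv {b b' g x y : ℝ → ℝ} {a T : ℝ}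
    (ha : a < 0) (hb : ∀ z, a < z → 0 ≤ b z) (hcont : ContinuousOn b (Ici 0))
    (hderiv : ∀ z ∈ Ioi 0, HasDerivAt b (b' z) z) (hb'0 : ∀ z ∈ Ioi 0, 0 ≤ b' z)
    (hanti : AntitoneOn b' (Ioi 0)) (hg0 : ∀ t, 0 ≤ g t)
    (hgpos : ∀ᵐ s ∂volume.restrict (Icc 0 T), 0 < g s)
    (hk : IntegrableOn (fun s => b' (g s)) (Icc 0 T))
    (hx : ContinuousOn x (Icc 0 T))
    (heqx : ∀ t ∈ Icc 0 T, x t = (∫ s in (0 : ℝ)..t, b (x s)) + g t)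
    (hy : ContinuousOn y (Icc 0 T))
    (heqy : ∀ t ∈ Icc 0 T, y t = (∫ s in (0 : ℝ)..t, b (y s)) + g t) :
    ∀ t ∈ Icc 0 T, x t = y t := by
  have hgx := le_of_integral_equation ha hb hg0 hx heqx
  have hgy := le_of_integral_equation ha hb hg0 hy heqy
  refine eqOn_of_integral_equation hk (hgpos.mono fun s hs => hb'0 _ hs) hx hy
    (hcont.comp hx fun s hs => (hg0 s).trans (hgx s hs))
    (hcont.comp hy fun s hs => (hg0 s).trans (hgy s hs)) ?_ heqx heqy
  filter_upwards [hgpos, ae_restrict_mem measurableSet_Icc] with s hs hsT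
  have hsub : Ici (g s) ⊆ Ioi 0 := Ici_subset_Ioi.2 hs
  exact abs_sub_le_deriv_mul_of_antitoneOn (fun z hz => hderiv z (hsub hz))
    (fun z hz => hb'0 z (hsub hz)) (hanti.mono hsub) (hgy s hsT) (hgx s hsT)

namespace IsBrownianMotion
variable {Ω : Type*} [MeasurableSpace Ω] {P : Measure Ω} {W : ℝ → Ω → ℝ}

theorem measurable_uncurry_swap (hW : IsBrownianMotion P W) :
    Measurable fun p : Ω × ℝ => W p.2 p.1 :=
  (measurable_uncurry_of_continuous_of_measurable hW.2.1 hW.2.2.1).comp measurable_swap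

theorem ae_ae_ne_zero [SFinite P] (hW : IsBrownianMotion P W) :
    ∀ᵐ ω ∂P, ∀ᵐ s ∂volume.restrict (Ici 0), W s ω ≠ 0 := by
  rw [Measure.ae_ae_comm (p := fun ω s => W s ω ≠ 0)
    (hW.measurable_uncurry_swap (measurableSet_singleton 0).compl)]
  filter_upwards [ae_restrict_mem measurableSet_Ici, Measure.ae_ne _ 0] with s hs hs0
  have hpos : 0 < s := lt_of_le_of_ne hs (Ne.symm hs0)
  have hlaw : P.map (W s) = gaussianReal 0 s.toNNReal := by
    simpa [hW.1] using hW.2.2.2.1 0 s le_rfl hs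
  have := nullSingletonClass_gaussianReal (μ := 0) (Real.toNNReal_pos.2 hpos).ne'
  rw [ae_iff]
  simp only [ne_eq, not_not]
  change P (W s ⁻¹' {0}) = 0
  rw [← Measure.map_apply (hW.2.2.1 s) (measurableSet_singleton 0), hlaw, measure_singleton]

theorem ae_integrableOn_comp_abs [SFinite P] (hW : IsBrownianMotion P W) {h : ℝ → ℝ}
    (hcont : ContinuousOn h (Ioi 0)) (h0 : ∀ z ∈ Ioi 0, 0 ≤ h z) {T : ℝ}
    (hfin : ∫⁻ ω, ∫⁻ s in Ioc 0 T, ENNReal.ofReal (h |W s ω|) ∂volume ∂P < ⊤) :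
    ∀ᵐ ω ∂P, IntegrableOn (fun s => h |W s ω|) (Ioc 0 T) := by
  have hpos : ∀ᵐ ω ∂P, ∀ᵐ s ∂volume.restrict (Ioc 0 T), 0 < |W s ω| :=
    hW.ae_ae_ne_zero.mono fun ω hω => (ae_restrict_of_ae_restrict_of_subset
      (fun s hs => mem_Ici.2 hs.1.le) hω).mono fun s => abs_pos.2
  -- `h` is arbitrary on `(-∞, 0]`; `hplus` is a measurable version, equal to it where `W ≠ 0`
  set hplus := (Ioi 0).piecewise h 0
  have hplus_meas : Measurable hplus :=
    hcont.measurable_piecewise continuousOn_const measurableSet_Ioi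
  have heq : ∀ᵐ ω ∂P, ∀ᵐ s ∂volume.restrict (Ioc 0 T), hplus |W s ω| = h |W s ω| :=
    hpos.mono fun ω hω => hω.mono fun s hs => piecewise_eq_of_mem _ _ _ hs
  have hF : ∀ᵐ ω ∂P, ∫⁻ s in Ioc 0 T, ENNReal.ofReal (h |W s ω|) < ⊤ := by
    refine ae_lt_top' ?_ hfin.ne
    refine (Measurable.lintegral_prod_right' (ν := volume.restrict (Ioc 0 T))
      (ENNReal.measurable_ofReal.comp (hplus_meas.comp hW.measurable_uncurry_swap.abs))
      ).aemeasurable.congr ?_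
    exact heq.mono fun ω hω =>
      lintegral_congr_ae (hω.mono fun s hs => congrArg ENNReal.ofReal hs)
  filter_upwards [hpos, heq, hF] with ω hpos heq hF
  have hmeas : AEStronglyMeasurable (fun s => h |W s ω|) (volume.restrict (Ioc 0 T)) :=
    ((hplus_meas.comp (hW.2.1 ω).abs.measurable).aestronglyMeasurable).congr heq
  exact ⟨hmeas, (hasFiniteIntegral_iff_ofReal (hpos.mono fun s hs => h0 _ hs)).2 hF⟩

end IsBrownianMotion

theorem stmt19_general {Ω : Type*} [MeasurableSpace Ω] (P : Measure Ω) [IsProbabilityMeasure P]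
    (W : ℝ → Ω → ℝ) (hW : IsBrownianMotion P W) (T : ℝ)
    (b b' : ℝ → ℝ)
    (hb0 : b 0 = 0)
    (hbmono : MonotoneOn b (Set.Ioi (0 : ℝ)))
    (hbcontIci : ContinuousOn b (Set.Ici (0 : ℝ)))
    (hbderiv : ∀ x ∈ Set.Ioi (0 : ℝ), HasDerivAt b (b' x) x)
    (hb'cont : ContinuousOn b' (Set.Ioi (0 : ℝ)))
    (hb'anti : AntitoneOn b' (Set.Ioi (0 : ℝ)))
    (hH7 : ∫⁻ ω, ∫⁻ s in Set.Ioc (0 : ℝ) T,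
      ENNReal.ofReal (b' |W s ω|) ∂volume ∂P < ⊤)
    (ε : ℝ) (hε : 0 < ε)
    (hbnonneg : ∀ x ∈ Set.Ioo (-ε) (0 : ℝ), 0 ≤ b x) :
    ∀ᵐ ωp ∂P,
      (∃ x : ℝ → ℝ, ContinuousOn x (Set.Icc 0 T) ∧
        ∀ t ∈ Set.Icc (0 : ℝ) T, x t = (∫ s in (0 : ℝ)..t, b (x s)) + |W t ωp|) ∧
      ∀ x xbar : ℝ → ℝ,
        ContinuousOn x (Set.Icc 0 T) →
        (∀ t ∈ Set.Icc (0 : ℝ) T, x t = (∫ s in (0 : ℝ)..t, b (x s)) + |W t ωp|) →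
        ContinuousOn xbar (Set.Icc 0 T) →
        (∀ t ∈ Set.Icc (0 : ℝ) T, xbar t = (∫ s in (0 : ℝ)..t, b (xbar s)) + |W t ωp|) →
        ∀ t ∈ Set.Icc (0 : ℝ) T, x t = xbar t := by
  have hmono : MonotoneOn b (Ici 0) := hbmono.Ici_of_Ioi hbcontIci
  have hb'0 (z : ℝ) (hz : z ∈ Ioi 0) : 0 ≤ b' z :=
    (hbderiv z hz).nonneg_of_monotoneOn_isOpen hbmono isOpen_Ioi hz
  have hb (z : ℝ) (hz : -ε < z) : 0 ≤ b z :=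
    (lt_or_ge z 0).elim (fun h => hbnonneg z ⟨hz, h⟩) fun h => hb0 ▸ hmono self_mem_Ici h h
  filter_upwards [hW.ae_ae_ne_zero, hW.ae_integrableOn_comp_abs hb'cont hb'0 hH7]
    with ω hne hint
  have hg : Continuous fun t => |W t ω| := (hW.2.1 ω).abs
  have hgpos : ∀ᵐ s ∂volume.restrict (Icc 0 T), 0 < |W s ω| :=
    (ae_restrict_of_ae_restrict_of_subset Icc_subset_Ici_self hne).mono fun s => abs_pos.2
  exact ⟨exists_solution_of_linear_growth hb0 hmono hbcontIci
      (fun y hy => le_add_mul_of_antitoneOn_deriv hmono hbderiv hb'0 hb'anti hy) hg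
      fun t => abs_nonneg _,
    fun x xbar hx hxeq hxbar hxbareq => eqOn_of_integral_equation_of_antitoneOn_deriv
      (neg_lt_zero.2 hε) hb hbcontIci hbderiv hb'0 hb'anti (fun t => abs_nonneg _) hgpos
      ((integrableOn_Icc_iff_integrableOn_Ioc).2 hint) hx hxeq hxbar hxbareq⟩

/-- Proposition 2.7: let `W` be a standard Brownian motion and `b` satisfy
H1–H3 (`b 0 = 0`; non-decreasing on `(0,∞)`; continuous on `[0,∞)` and `C¹` on `(0,∞)`
with non-increasing derivative `b'`), H7 (`E[∫₀ᵀ b'(|W s|+) ds] < ∞`, with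
`b'(|W s|+) = b' |W s|` a.s.), and `b ≥ 0` on `(-ε,0)` for some `ε > 0`. Then for almost
every sample path of `W`, the equation `X t = ∫₀ᵗ b (X s) ds + |W t|` has exactly one
continuous solution on `[0,T]`. -/
theorem stmt19 {Ω : Type*} [MeasurableSpace Ω] (P : Measure Ω) [IsProbabilityMeasure P]
    (W : ℝ → Ω → ℝ) (hW : IsBrownianMotion P W) (T : ℝ) (hT : 0 < T)
    (b b' : ℝ → ℝ)
    (hb0 : b 0 = 0)
    (hbmono : MonotoneOn b (Set.Ioi (0 : ℝ)))
    (hbcontIci : ContinuousOn b (Set.Ici (0 : ℝ)))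
    (hbderiv : ∀ x ∈ Set.Ioi (0 : ℝ), HasDerivAt b (b' x) x)
    (hb'cont : ContinuousOn b' (Set.Ioi (0 : ℝ)))
    (hb'anti : AntitoneOn b' (Set.Ioi (0 : ℝ)))
    (hH7 : ∫⁻ ω, ∫⁻ s in Set.Ioc (0 : ℝ) T,
      ENNReal.ofReal (b' |W s ω|) ∂volume ∂P < ⊤)
    (ε : ℝ) (hε : 0 < ε)
    (hbnonneg : ∀ x ∈ Set.Ioo (-ε) (0 : ℝ), 0 ≤ b x) :
    ∀ᵐ ωp ∂P,
      (∃ x : ℝ → ℝ, ContinuousOn x (Set.Icc 0 T) ∧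
        ∀ t ∈ Set.Icc (0 : ℝ) T, x t = (∫ s in (0 : ℝ)..t, b (x s)) + |W t ωp|) ∧
      ∀ x xbar : ℝ → ℝ,
        ContinuousOn x (Set.Icc 0 T) →
        (∀ t ∈ Set.Icc (0 : ℝ) T, x t = (∫ s in (0 : ℝ)..t, b (x s)) + |W t ωp|) →
        ContinuousOn xbar (Set.Icc 0 T) →
        (∀ t ∈ Set.Icc (0 : ℝ) T, xbar t = (∫ s in (0 : ℝ)..t, b (xbar s)) + |W t ωp|) →
        ∀ t ∈ Set.Icc (0 : ℝ) T, x t = xbar t :=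
  stmt19_general P W hW T b b' hb0 hbmono hbcontIci hbderiv hb'cont hb'anti hH7 ε hε hbnonneg
end
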